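/- arXiv:math/0511376 — 4 statements merged into one kernel-verified Lean document; each statement's English description precedes it below -/
import Mathlib

section
/- There exist a constant C > 0 and n_0 ∈ ℕ such that q^{k*}(n) ≤ C k^3 L(n)/n^{3/2} for all k ≥ 1 and all n ≥ n_0. -/
/-!
When `n ≥ N k`, one of `k` summands adding up to `n` is at least `n / k`, so a union bound gives
`q^{k*}(n) ≤ k · max_{n/k ≤ m ≤ n} q(m)`. By the tail asymptotics and Potter's bound
`L(m) ≤ √2 √(n/m) L(n)`, itself a consequence of the uniform convergence theorem for slowly varying
sequences, this maximum is `O(k² L(n) / n^{3/2})`. When `n < N k`, the trivial bound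
`q^{k*}(n) ≤ 1` suffices, since Potter's bound also gives `L(n) ≥ c / √n`.
-/

open Filter Finset

/-- The `k`-fold convolution of `q : ℕ → ℝ` with itself. -/
noncomputable def convPow (q : ℕ → ℝ) : ℕ → ℕ → ℝ
  | 0, n => if n = 0 then 1 else 0
  | k + 1, n => ∑ i ∈ Finset.range (n + 1), convPow q k i * q (n - i)

/-- `L : ℕ → ℝ` is slowly varying at infinity: `L(⌊cn⌋)/L(n) → 1` for every `c > 0`. -/
def SlowlyVaryingNat (L : ℕ → ℝ) : Prop :=
  ∀ c : ℝ, 0 < c → Tendsto (fun n : ℕ => L ⌊c * (n : ℝ)⌋₊ / L n) atTop (nhds 1)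

section ConvPow

variable {q : ℕ → ℝ}

theorem sum_range_le_one_of_tsum_eq_one (hq : ∀ n, 0 ≤ q n) (hsum : ∑' n, q n = 1) (M : ℕ) :
    ∑ i ∈ range M, q i ≤ 1 := by
  have hsummable : Summable q := by
    by_contra h
    rw [tsum_eq_zero_of_not_summable h] at hsum
    exact zero_ne_one hsum
  exact hsum ▸ hsummable.sum_le_tsum _ fun i _ => hq i

theorem convPow_nonneg (hq : ∀ n, 0 ≤ q n) : ∀ k n, 0 ≤ convPow q k n
  | 0, n => by unfold convPow; split_ifs <;> norm_num
  | k + 1, n => sum_nonneg fun i _ => mul_nonneg (convPow_nonneg hq k i) (hq _)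

theorem convPow_one (n : ℕ) : convPow q 1 n = q n := by
  simp [convPow]

theorem convPow_succ' (k n : ℕ) :
    convPow q (k + 1) n = ∑ m ∈ range (n + 1), q m * convPow q k (n - m) := by
  rw [convPow, ← sum_range_reflect]
  refine sum_congr rfl fun m hm => ?_
  rw [mem_range] at hm
  rw [mul_comm, Nat.add_sub_cancel, Nat.sub_sub_self (by omega)]

theorem sum_range_convPow_le_one (hq : ∀ n, 0 ≤ q n) (hq1 : ∀ M, ∑ i ∈ range M, q i ≤ 1) :
    ∀ k M, ∑ i ∈ range M, convPow q k i ≤ 1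
  | 0, M => by
    rcases M with _ | M
    · simp
    · simp [convPow, sum_ite_eq']
  | k + 1, M =>
    calc ∑ n ∈ range M, convPow q (k + 1) n
        = ∑ i ∈ range M, convPow q k i * ∑ j ∈ range (M - i), q j := by
          simp only [convPow, mul_sum]
          exact sum_range_diag_flip M fun i j => convPow q k i * q j
      _ ≤ ∑ i ∈ range M, convPow q k i :=
          sum_le_sum fun i _ => mul_le_of_le_one_right (convPow_nonneg hq k i) (hq1 _)
      _ ≤ 1 := sum_range_convPow_le_one hq hq1 k M

theorem convPow_le_one (hq : ∀ n, 0 ≤ q n) (hq1 : ∀ M, ∑ i ∈ range M, q i ≤ 1) (k n : ℕ) :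
    convPow q k n ≤ 1 :=
  (single_le_sum (fun i _ => convPow_nonneg hq k i) (self_mem_range_succ n)).trans
    (sum_range_convPow_le_one hq hq1 k (n + 1))

/-- Of `k + 1` summands adding up to `n > (k + 1) s`, one exceeds `s`: split off the first summand
and use induction when it is at most `s`. -/
theorem convPow_succ_le_mul (hq : ∀ n, 0 ≤ q n) (hq1 : ∀ M, ∑ i ∈ range M, q i ≤ 1)
    {s : ℕ} {Q : ℝ} :
    ∀ k n, (k + 1) * s < n → (∀ m, s < m → m ≤ n → q m ≤ Q) →
      convPow q (k + 1) n ≤ (k + 1) * Q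
  | 0, n, hsn, hQ => by
    rw [convPow_one]; simpa using hQ n (by omega) le_rfl
  | k + 1, n, hsn, hQ => by
    have hQ0 : 0 ≤ Q := (hq n).trans (hQ n (by nlinarith) le_rfl)
    have hterm : ∀ m ∈ range (n + 1), q m * convPow q (k + 1) (n - m)
        ≤ q m * ((k + 1) * Q) + Q * convPow q (k + 1) (n - m) := by
      intro m hm
      have hc := convPow_nonneg hq (k + 1) (n - m)
      rcases le_or_gt m s with hms | hsm
      · have hsn' : (k + 1) * s + s < n := by linarith
        have hIH := convPow_succ_le_mul hq hq1 k (n - m) (by omega)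
          fun m' hsm' hm' => hQ m' hsm' (by omega)
        calc q m * convPow q (k + 1) (n - m) ≤ q m * ((k + 1) * Q) :=
              mul_le_mul_of_nonneg_left hIH (hq m)
          _ ≤ _ := le_add_of_nonneg_right (mul_nonneg hQ0 hc)
      · have hqm := hQ m hsm (by simpa [Nat.lt_succ_iff] using hm)
        calc q m * convPow q (k + 1) (n - m) ≤ Q * convPow q (k + 1) (n - m) :=
              mul_le_mul_of_nonneg_right hqm hc
          _ ≤ _ := le_add_of_nonneg_left (mul_nonneg (hq m) (by positivity))
    have hmass : ∑ m ∈ range (n + 1), convPow q (k + 1) (n - m) ≤ 1 := by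
      have := sum_range_convPow_le_one hq hq1 (k + 1) (n + 1)
      rwa [← sum_range_reflect, Nat.add_sub_cancel] at this
    calc convPow q (k + 1 + 1) n
        ≤ ∑ m ∈ range (n + 1), (q m * ((k + 1) * Q) + Q * convPow q (k + 1) (n - m)) := by
          rw [convPow_succ']; exact sum_le_sum hterm
      _ = (∑ m ∈ range (n + 1), q m) * ((k + 1) * Q)
            + Q * ∑ m ∈ range (n + 1), convPow q (k + 1) (n - m) := by
          rw [sum_add_distrib, sum_mul, mul_sum]
      _ ≤ 1 * ((k + 1) * Q) + Q * 1 := by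
          gcongr
          exact hq1 _
      _ = ((k + 1 : ℕ) + 1) * Q := by push_cast; ring

end ConvPow

open MeasureTheory

theorem exists_mem_and_mul_mem_of_volume_le {E : Set ℝ} (hE : MeasurableSet E)
    (hEsub : E ⊆ Set.Icc 1 4) (hvolE : ENNReal.ofReal (5 / 2) ≤ volume E) {ρ : ℝ}
    (hρ1 : 1 ≤ ρ) (hρ2 : ρ ≤ 2) :
    ∃ c ∈ E, ρ * c ∈ E := by
  have hρ0 : 0 < ρ := by linarith
  have hvolρE : ENNReal.ofReal (5 / 4) ≤ volume ((ρ * ·) ⁻¹' E) :=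
    calc ENNReal.ofReal (5 / 4) = ENNReal.ofReal (1 / 2) * ENNReal.ofReal (5 / 2) := by
          rw [← ENNReal.ofReal_mul (by norm_num)]; norm_num
      _ ≤ ENNReal.ofReal |ρ⁻¹| * volume E := by
          refine mul_le_mul' (ENNReal.ofReal_le_ofReal ?_) hvolE
          rw [abs_of_pos (inv_pos.2 hρ0)]
          simpa [one_div] using inv_anti₀ hρ0 hρ2
      _ = volume ((ρ * ·) ⁻¹' E) := (Real.volume_preimage_mul_left hρ0.ne' E).symm
  obtain ⟨c, hcE, hρcE⟩ : (E ∩ (ρ * ·) ⁻¹' E).Nonempty := by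
    refine nonempty_inter_of_measure_lt_add' volume hE (u := Set.Icc (1 / 2) 4) ?_ ?_ ?_
    · exact fun x hx => ⟨by linarith [(hEsub hx).1], (hEsub hx).2⟩
    · intro x hx
      have h1 := (hEsub hx).1
      have h4 := (hEsub hx).2
      have hx0 : 0 < x := by nlinarith
      constructor <;> nlinarith
    · calc volume (Set.Icc (1 / 2 : ℝ) 4) = ENNReal.ofReal (5 / 2 + 5 / 4 - 1 / 4) := by
            rw [Real.volume_Icc]; norm_num
        _ < ENNReal.ofReal (5 / 2) + ENNReal.ofReal (5 / 4) := by
            rw [← ENNReal.ofReal_add (by norm_num) (by norm_num),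
              ENNReal.ofReal_lt_ofReal_iff (by norm_num)]
            norm_num
        _ ≤ _ := add_le_add hvolE hvolρE
  exact ⟨c, hcE, hρcE⟩

theorem exists_uniform_on_large_subset_Icc {h : ℕ → ℝ}
    (hconv : ∀ c : ℝ, 0 < c → Tendsto (fun n : ℕ => h ⌊c * n⌋₊ - h n) atTop (nhds 0))
    {ε : ℝ} (hε : 0 < ε) :
    ∃ E ⊆ Set.Icc (1 : ℝ) 4, MeasurableSet E ∧ ENNReal.ofReal (5 / 2) ≤ volume E ∧
      ∃ N : ℕ, ∀ j, N ≤ j → ∀ c ∈ E, |h ⌊c * j⌋₊ - h j| < ε := by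
  have hf : ∀ j : ℕ, StronglyMeasurable fun c : ℝ => h ⌊c * j⌋₊ - h j := fun j =>
    ((measurable_from_top.comp (Nat.measurable_floor.comp (measurable_id.mul_const _))).sub_const
      _).stronglyMeasurable
  obtain ⟨t, -, ht, hvolt, hunif⟩ := tendstoUniformlyOn_of_ae_tendsto (μ := volume)
    (g := fun _ => 0) hf stronglyMeasurable_const (measurableSet_Icc (a := (1 : ℝ)) (b := 4))
    (by simp) (ae_of_all _ fun c hc => hconv c (by linarith [hc.1]))
    (by norm_num : (0 : ℝ) < 1 / 2)
  refine ⟨Set.Icc 1 4 \ t, Set.sdiff_subset, measurableSet_Icc.diff ht, ?_, ?_⟩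
  · calc ENNReal.ofReal (5 / 2) = ENNReal.ofReal (4 - 1) - ENNReal.ofReal (1 / 2) := by
          rw [← ENNReal.ofReal_sub _ (by norm_num)]; norm_num
      _ ≤ volume (Set.Icc (1 : ℝ) 4) - volume t := by rw [Real.volume_Icc]; gcongr
      _ ≤ volume (Set.Icc 1 4 \ t) := le_measure_sdiff
  · obtain ⟨N, hN⟩ := eventually_atTop.1 (Metric.tendstoUniformlyOn_iff.1 hunif ε hε)
    exact ⟨N, fun j hj c hc => by simpa [Real.dist_eq, abs_sub_comm] using hN j hj c hc⟩

/-- Uniform convergence on ratios `n / m ∈ [1, 2]`: with `E` the set given by Egorov's theorem,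
`m` and `n` are both compared with `⌊c n⌋ = ⌊(n / m) c m⌋` for some `c` with `c, (n / m) c ∈ E`. -/
theorem exists_abs_sub_le_of_tendsto_floor {h : ℕ → ℝ}
    (hconv : ∀ c : ℝ, 0 < c → Tendsto (fun n : ℕ => h ⌊c * n⌋₊ - h n) atTop (nhds 0))
    {ε : ℝ} (hε : 0 < ε) :
    ∃ N : ℕ, 0 < N ∧ ∀ m n : ℕ, N ≤ m → m ≤ n → n ≤ 2 * m → |h m - h n| ≤ ε := by
  obtain ⟨E, hEsub, hE, hvolE, N, hN⟩ := exists_uniform_on_large_subset_Icc hconv (half_pos hε)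
  refine ⟨N + 1, N.succ_pos, fun m n hm hmn hnm => ?_⟩
  have hm0 : (0 : ℝ) < m := by exact_mod_cast (show 0 < m by omega)
  obtain ⟨c, hcE, hρcE⟩ := exists_mem_and_mul_mem_of_volume_le hE hEsub hvolE (ρ := n / m)
    ((one_le_div hm0).2 (by exact_mod_cast hmn))
    ((div_le_iff₀ hm0).2 (by exact_mod_cast hnm))
  have hfloor : ⌊(n / m : ℝ) * c * m⌋₊ = ⌊c * n⌋₊ := by
    congr 1; field_simp
  have hn := hN n (by omega) c hcE
  have hm := hN m (by omega) _ hρcE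
  rw [hfloor] at hm
  have := abs_sub_le (h m) (h ⌊c * n⌋₊) (h n)
  rw [abs_sub_comm (h m) (h ⌊c * n⌋₊)] at this
  linarith

theorem Real.rpow_three_halves {x : ℝ} (hx : 0 ≤ x) : x ^ ((3 : ℝ) / 2) = x * √x := by
  rw [show (3 : ℝ) / 2 = 1 + 1 / 2 by norm_num, Real.rpow_add' hx (by norm_num), Real.rpow_one,
    Real.sqrt_eq_rpow]

namespace SlowlyVaryingNat

variable {L : ℕ → ℝ}

theorem tendsto_log_sub (hLpos : ∀ n, 0 < L n) (hL : SlowlyVaryingNat L) {c : ℝ} (hc : 0 < c) :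
    Tendsto (fun n : ℕ => Real.log (L ⌊c * n⌋₊) - Real.log (L n)) atTop (nhds 0) := by
  have := (Real.continuousAt_log one_ne_zero).tendsto.comp (hL c hc)
  rw [Real.log_one] at this
  exact this.congr fun n => Real.log_div (hLpos _).ne' (hLpos _).ne'

theorem exists_le_sqrt_two_mul (hLpos : ∀ n, 0 < L n) (hL : SlowlyVaryingNat L) :
    ∃ N : ℕ, 0 < N ∧ ∀ m n : ℕ, N ≤ m → m ≤ n → n ≤ 2 * m → L m ≤ √2 * L n := by
  have hlog : 0 < Real.log √2 := Real.log_pos (by rw [Real.lt_sqrt zero_le_one]; norm_num)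
  obtain ⟨N, hN, h⟩ :=
    exists_abs_sub_le_of_tendsto_floor (h := fun n => Real.log (L n))
      (fun c hc => hL.tendsto_log_sub hLpos hc) hlog
  refine ⟨N, hN, fun m n hm hmn hnm => ?_⟩
  have := (abs_le.1 (h m n hm hmn hnm)).2
  rw [← Real.log_le_log_iff (hLpos m) (by positivity [hLpos n]),
    Real.log_mul (by positivity) (hLpos n).ne']
  linarith

/-- Potter's bound with exponent `1/2`, obtained by iterating `exists_le_sqrt_two_mul` along the
doubling chain `m, 2m, 4m, …`. -/
theorem exists_le_sqrt_mul (hLpos : ∀ n, 0 < L n) (hL : SlowlyVaryingNat L) :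
    ∃ N : ℕ, 0 < N ∧ ∀ m n : ℕ, N ≤ m → m ≤ n → L m ≤ √2 * √(n / m) * L n := by
  obtain ⟨N, hN, h2⟩ := hL.exists_le_sqrt_two_mul hLpos
  refine ⟨N, hN, fun m n hm hmn => ?_⟩
  have hdirect : ∀ m, N ≤ m → m ≤ n → n ≤ 2 * m → L m ≤ √2 * √(n / m) * L n := by
    intro m hm hmn hnm
    have hm0 : (0 : ℝ) < m := by exact_mod_cast hN.trans_le hm
    have : 1 ≤ √((n : ℝ) / m) :=
      Real.one_le_sqrt.2 ((one_le_div hm0).2 (by exact_mod_cast hmn))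
    calc L m ≤ √2 * L n := h2 m n hm hmn hnm
      _ ≤ √2 * √(n / m) * L n := by
          rw [mul_assoc]; gcongr; exact le_mul_of_one_le_left (hLpos n).le this
  suffices ∀ j m, N ≤ m → m ≤ n → n ≤ 2 ^ j * m → L m ≤ √2 * √(n / m) * L n from
    this n m hm hmn ((Nat.lt_two_pow_self).le.trans (Nat.le_mul_of_pos_right _ (hN.trans_le hm)))
  intro j
  induction j with
  | zero => exact fun m hm hmn hnm => hdirect m hm hmn (by omega)
  | succ j ih =>
    intro m hm hmn hnm
    rcases le_or_gt n (2 * m) with hn2 | hn2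
    · exact hdirect m hm hmn hn2
    calc L m ≤ √2 * L (2 * m) := h2 m (2 * m) hm (by omega) le_rfl
      _ ≤ √2 * (√2 * √(n / (2 * m : ℕ)) * L n) := by
          gcongr
          exact ih (2 * m) (by omega) hn2.le (by rw [pow_succ] at hnm; linarith)
      _ = √2 * √(n / m) * L n := by
          have : √2 * √(n / (2 * m : ℕ)) = √(n / m) := by
            rw [← Real.sqrt_mul zero_le_two]
            push_cast
            field_simp
          rw [← this]
          ring

theorem exists_one_le_mul_sqrt_mul (hLpos : ∀ n, 0 < L n) (hL : SlowlyVaryingNat L) :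
    ∃ B : ℝ, 0 < B ∧ ∃ N : ℕ, ∀ n : ℕ, N ≤ n → 1 ≤ B * √n * L n := by
  obtain ⟨N, hN, hP⟩ := hL.exists_le_sqrt_mul hLpos
  have hN0 : (0 : ℝ) < N := by exact_mod_cast hN
  refine ⟨√2 / (√N * L N), by positivity [hLpos N], N, fun n hn => ?_⟩
  have := hP N n le_rfl hn
  rw [Real.sqrt_div' _ hN0.le] at this
  rw [div_mul_eq_mul_div, div_mul_eq_mul_div, le_div_iff₀ (by positivity [hLpos N])]
  calc 1 * (√N * L N) = √N * L N := one_mul _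
    _ ≤ √N * (√2 * (√n / √N) * L n) := by gcongr
    _ = √2 * √n * L n := by field_simp

end SlowlyVaryingNat

theorem exists_le_mul_sq_mul_div_rpow {L q : ℕ → ℝ} {c_q : ℝ} (hLpos : ∀ n, 0 < L n)
    (hL : SlowlyVaryingNat L) (hcq : 0 < c_q)
    (hqa : Tendsto (fun n : ℕ => (n : ℝ) ^ ((3 : ℝ) / 2) * q n / L n) atTop (nhds c_q)) :
    ∃ A : ℝ, 0 ≤ A ∧ ∃ N : ℕ, 0 < N ∧ ∀ m n : ℕ, N ≤ m → m ≤ n →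
      q m ≤ A * ((n : ℝ) / m) ^ 2 * (L n / (n : ℝ) ^ ((3 : ℝ) / 2)) := by
  obtain ⟨N₀, hN₀, hP⟩ := hL.exists_le_sqrt_mul hLpos
  obtain ⟨n₁, hn₁⟩ := eventually_atTop.1 (hqa.eventually (eventually_le_nhds (by linarith :
    c_q < 2 * c_q)))
  refine ⟨2 * √2 * c_q, by positivity, max N₀ n₁, lt_max_of_lt_left hN₀, fun m n hm hmn => ?_⟩
  have hm0 : (0 : ℝ) < m := by exact_mod_cast hN₀.trans_le (le_of_max_le_left hm)
  have hqm : q m ≤ 2 * c_q * L m / (m : ℝ) ^ ((3 : ℝ) / 2) := by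
    rw [le_div_iff₀ (by positivity), mul_comm]
    exact (div_le_iff₀ (hLpos m)).1 (hn₁ m (le_of_max_le_right hm))
  have hx : (0 : ℝ) < n / m := div_pos (hm0.trans_le (by exact_mod_cast hmn)) hm0
  have hsq : 0 < √((n : ℝ) / m) := Real.sqrt_pos.2 hx
  have hn : (n : ℝ) ^ ((3 : ℝ) / 2) = (n / m) * √(n / m) * (m : ℝ) ^ ((3 : ℝ) / 2) := by
    rw [← Real.rpow_three_halves hx.le, ← Real.mul_rpow hx.le hm0.le, div_mul_cancel₀ _ hm0.ne']
  calc q m ≤ 2 * c_q * L m / (m : ℝ) ^ ((3 : ℝ) / 2) := hqm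
    _ ≤ 2 * c_q * (√2 * √(n / m) * L n) / (m : ℝ) ^ ((3 : ℝ) / 2) := by
        gcongr; exact hP m n (le_of_max_le_left hm) hmn
    _ = 2 * √2 * c_q * ((n : ℝ) / m) ^ 2 * (L n / (n : ℝ) ^ ((3 : ℝ) / 2)) := by
        rw [hn]
        field_simp
        rw [Real.sq_sqrt hx.le]
        field_simp

theorem convPow_le_mul_pow_three {q g : ℕ → ℝ} (hq : ∀ n, 0 ≤ q n)
    (hq1 : ∀ M, ∑ i ∈ range M, q i ≤ 1) {A : ℝ} {N : ℕ} (hN : 0 < N)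
    (hqle : ∀ m n : ℕ, N ≤ m → m ≤ n → q m ≤ A * ((n : ℝ) / m) ^ 2 * g n) {k n : ℕ}
    (hk : 1 ≤ k) (hkn : N * k ≤ n) :
    convPow q k n ≤ A * k ^ 3 * g n := by
  obtain ⟨j, rfl⟩ : ∃ j, k = j + 1 := ⟨k - 1, by omega⟩
  have hn : 0 < n := by nlinarith
  have hAg : 0 ≤ A * g n := by
    have := (hq n).trans (hqle n n (le_of_mul_le_of_one_le_left hkn hk) le_rfl)
    rwa [div_self (by positivity), one_pow, mul_one] at this
  calc convPow q (j + 1) n ≤ (j + 1) * (A * g n * (j + 1) ^ 2) := by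
        refine convPow_succ_le_mul hq hq1 j n (s := (n - 1) / (j + 1))
          ((Nat.mul_div_le _ _).trans_lt (by omega)) fun m hsm hmn => ?_
        have hnm : n ≤ (j + 1) * m := by
          have := (Nat.div_lt_iff_lt_mul (by omega)).1 hsm
          rw [mul_comm]; omega
        have hm0 : (0 : ℝ) < m := by exact_mod_cast (Nat.zero_le _).trans_lt hsm
        calc q m ≤ A * ((n : ℝ) / m) ^ 2 * g n :=
              hqle m n (Nat.le_of_mul_le_mul_right (by linarith) (Nat.succ_pos j)) hmn
          _ = A * g n * ((n : ℝ) / m) ^ 2 := by ring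
          _ ≤ A * g n * (j + 1) ^ 2 := by
              gcongr
              rw [div_le_iff₀ hm0]
              exact_mod_cast hnm
    _ = A * ((j + 1 : ℕ) : ℝ) ^ 3 * g n := by push_cast; ring

theorem rpow_three_halves_le_of_lt_mul {B ℓ : ℝ} {N k n : ℕ} (h : 1 ≤ B * √n * ℓ)
    (hnk : n < N * k) (hk : 1 ≤ k) :
    (n : ℝ) ^ ((3 : ℝ) / 2) ≤ B * N ^ 2 * k ^ 3 * ℓ := by
  have hBℓ : 0 ≤ B * ℓ := by nlinarith [Real.sqrt_nonneg n]
  have hnk' : (n : ℝ) ^ 2 ≤ (N : ℝ) ^ 2 * (k : ℝ) ^ 3 := by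
    have : (n : ℝ) ≤ N * k := by exact_mod_cast hnk.le
    have hk' : (1 : ℝ) ≤ k := by exact_mod_cast hk
    calc (n : ℝ) ^ 2 ≤ ((N : ℝ) * k) ^ 2 := by gcongr
      _ ≤ ((N : ℝ) * k) ^ 2 * k := le_mul_of_one_le_right (sq_nonneg _) hk'
      _ = N ^ 2 * k ^ 3 := by ring
  calc (n : ℝ) ^ ((3 : ℝ) / 2) = n * √n := Real.rpow_three_halves (Nat.cast_nonneg n)
    _ ≤ n * √n * (B * √n * ℓ) := le_mul_of_one_le_right (by positivity) h
    _ = B * ℓ * n ^ 2 := by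
        linear_combination (B * ℓ * n) * Real.mul_self_sqrt (Nat.cast_nonneg n)
    _ ≤ B * ℓ * (N ^ 2 * k ^ 3) := by gcongr
    _ = B * N ^ 2 * k ^ 3 * ℓ := by ring

theorem stmt_2_general (L : ℕ → ℝ) (hLpos : ∀ n, 0 < L n) (hL : SlowlyVaryingNat L)
    (c_q : ℝ) (hcq : 0 < c_q)
    (q : ℕ → ℝ) (hqmem : ∀ n, q n ∈ Set.Icc (0 : ℝ) 1)
    (hqsum : ∑' n, q n = 1)
    (hqa : Tendsto (fun n : ℕ => (n : ℝ) ^ ((3 : ℝ) / 2) * q n / L n) atTop (nhds c_q)) :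
    ∃ C : ℝ, 0 < C ∧ ∃ n₀ : ℕ, ∀ k n : ℕ, 1 ≤ k → n₀ ≤ n →
      convPow q k n ≤ C * (k : ℝ) ^ 3 * L n / (n : ℝ) ^ ((3 : ℝ) / 2) := by
  have hq : ∀ n, 0 ≤ q n := fun n => (hqmem n).1
  have hq1 := sum_range_le_one_of_tsum_eq_one hq hqsum
  obtain ⟨A, hA, N₁, hN₁, hqle⟩ := exists_le_mul_sq_mul_div_rpow hLpos hL hcq hqa
  obtain ⟨B, hB, N₂, hlow⟩ := hL.exists_one_le_mul_sqrt_mul hLpos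
  refine ⟨A + B * N₁ ^ 2, by positivity, max N₁ N₂, fun k n hk hn => ?_⟩
  have hn0 : (0 : ℝ) < n := by exact_mod_cast hN₁.trans_le (le_of_max_le_left hn)
  rcases le_or_gt (N₁ * k) n with hkn | hkn
  · calc convPow q k n ≤ A * k ^ 3 * (L n / (n : ℝ) ^ ((3 : ℝ) / 2)) :=
          convPow_le_mul_pow_three hq hq1 hN₁ hqle hk hkn
      _ ≤ (A + B * N₁ ^ 2) * k ^ 3 * L n / (n : ℝ) ^ ((3 : ℝ) / 2) := by
          rw [← mul_div_assoc]
          gcongr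
          · exact (hLpos n).le
          · exact le_add_of_nonneg_right (by positivity)
  · calc convPow q k n ≤ 1 := convPow_le_one hq hq1 k n
      _ ≤ B * N₁ ^ 2 * k ^ 3 * L n / (n : ℝ) ^ ((3 : ℝ) / 2) :=
          (one_le_div (by positivity)).2
            (rpow_three_halves_le_of_lt_mul (hlow n (le_of_max_le_right hn)) hkn hk)
      _ ≤ (A + B * N₁ ^ 2) * k ^ 3 * L n / (n : ℝ) ^ ((3 : ℝ) / 2) := by
          gcongr
          · exact (hLpos n).le
          · exact le_add_of_nonneg_left hA

/-- There exist `C > 0` and `n₀` such that `q^{k*}(n) ≤ C k³ L(n)/n^{3/2}`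
for all `k ≥ 1` and all `n ≥ n₀`. -/
theorem stmt_2 (L : ℕ → ℝ) (hLpos : ∀ n, 0 < L n) (hL : SlowlyVaryingNat L)
    (c_q : ℝ) (hcq : 0 < c_q)
    (q : ℕ → ℝ) (hq0 : q 0 = 0) (hqmem : ∀ n, q n ∈ Set.Icc (0 : ℝ) 1)
    (hqsum : ∑' n, q n = 1)
    (hqa : Tendsto (fun n : ℕ => (n : ℝ) ^ ((3 : ℝ) / 2) * q n / L n) atTop (nhds c_q)) :
    ∃ C : ℝ, 0 < C ∧ ∃ n₀ : ℕ, ∀ k n : ℕ, 1 ≤ k → n₀ ≤ n →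
      convPow q k n ≤ C * (k : ℝ) ^ 3 * L n / (n : ℝ) ^ ((3 : ℝ) / 2) :=
  stmt_2_general L hLpos hL c_q hcq q hqmem hqsum hqa
end

section
/- (Localized regime, constrained case.) For every δ > 1, Z^c_{δ,N} ~ (1/μ_δ) e^{N F_δ} as N → ∞. -/
/-!
Tilting by `e^{-F t}` turns `e^{-N F} Z^c_{δ,N}` into the renewal sequence `u_N = ∑_k p^{k*}(N)`
of the probability distribution `p_t = δ q(t) e^{-F t}`, whose mean is `μ_δ`. Since `q(t) > 0` for
all large `t`, `p` is aperiodic, and the Erdős–Feller–Pollard renewal theorem gives `u_N → 1/μ_δ`.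

For the renewal theorem: `u` takes values in `[0,1]`, so along a subsequence `m_j` realising
`limsup u` (or `liminf u`) the shifted sequences `n ↦ u_{m_j - n}` converge to some `w`. By the
renewal equation `u_N = ∑_s p_s u_{N-s}`, `w` is harmonic, `w_n = ∑_s p_s w_{n+s}`, and it attains
its maximum (minimum) at `0`. The maximum principle and aperiodicity make `w` constant, and passing
to the limit in `∑_{t ≤ N} r_t u_{N-t} = 1`, where the tails `r_t = ∑_{s>t} p_s` sum to `μ`, shows
that the constant is `1/μ`.
-/

open Filter Finset

/-- The (modified) constrained partition function `Z^c_{δ,N} = ∑_{k=0}^{N} δ^k q^{k*}(N)`. -/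
noncomputable def Zc (q : ℕ → ℝ) (δ : ℝ) (N : ℕ) : ℝ :=
  ∑ k ∈ Finset.range (N + 1), δ ^ k * convPow q k N

open scoped Topology

lemma norm_mul_le_of_mem_Icc {a x : ℝ} (ha : 0 ≤ a) (hx : x ∈ Set.Icc (0 : ℝ) 1) : ‖a * x‖ ≤ a := by
  rw [norm_mul, Real.norm_of_nonneg ha, Real.norm_of_nonneg hx.1]
  exact mul_le_of_le_one_right ha hx.2

section ConvPow

variable {p : ℕ → ℝ}

lemma convPow_nonneg_s8 (hpnn : ∀ t, 0 ≤ p t) (k n : ℕ) : 0 ≤ convPow p k n := by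
  induction k generalizing n with
  | zero => simp only [convPow]; split <;> norm_num
  | succ k ih => exact sum_nonneg fun i _ => mul_nonneg (ih i) (hpnn _)

lemma convPow_eq_zero_of_lt (hp0 : p 0 = 0) {k n : ℕ} (h : n < k) : convPow p k n = 0 := by
  induction k generalizing n with
  | zero => omega
  | succ k ih =>
    refine sum_eq_zero fun i hi => ?_
    rcases lt_or_ge i k with hik | hik
    · rw [ih hik, zero_mul]
    · rw [show n - i = 0 by simp at hi; omega, hp0, mul_zero]

lemma convPow_tilt (q : ℕ → ℝ) (δ F : ℝ) (k N : ℕ) :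
    convPow (fun t => δ * q t * Real.exp (-F * t)) k N
      = δ ^ k * Real.exp (-F * N) * convPow q k N := by
  induction k generalizing N with
  | zero => rcases N with _ | N <;> simp [convPow]
  | succ k ih =>
    simp only [convPow, mul_sum, ih]
    refine sum_congr rfl fun i hi => ?_
    have hexp : Real.exp (-F * N) = Real.exp (-F * i) * Real.exp (-F * (N - i : ℕ)) := by
      rw [← Real.exp_add, Nat.cast_sub (by simp at hi; omega)]
      ring_nf
    rw [hexp]
    ring

end ConvPow

noncomputable def renewalSeq (p : ℕ → ℝ) (N : ℕ) : ℝ :=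
  ∑ k ∈ range (N + 1), convPow p k N

section RenewalSeq

variable {p : ℕ → ℝ}

lemma renewalSeq_zero (p : ℕ → ℝ) : renewalSeq p 0 = 1 := by
  simp [renewalSeq, convPow]

lemma renewalSeq_eq_sum_range (hp0 : p 0 = 0) {N M : ℕ} (h : N ≤ M) :
    renewalSeq p N = ∑ k ∈ range (M + 1), convPow p k N :=
  sum_subset (by simpa using h) fun k _ hk => convPow_eq_zero_of_lt hp0 (by simpa using hk)

lemma renewalSeq_eq (hp0 : p 0 = 0) {N : ℕ} (hN : N ≠ 0) :
    renewalSeq p N = ∑ s ∈ range (N + 1), p s * renewalSeq p (N - s) := by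
  obtain ⟨N, rfl⟩ := Nat.exists_eq_succ_of_ne_zero hN
  have hinner : ∀ i ∈ range (N + 2), ∑ k ∈ range (N + 1), convPow p k i * p (N + 1 - i)
      = renewalSeq p i * p (N + 1 - i) := by
    intro i hi
    rcases Nat.lt_or_ge i (N + 1) with hiN | hiN
    · rw [← sum_mul, renewalSeq_eq_sum_range hp0 (Nat.le_of_lt_succ hiN)]
    · rw [show N + 1 - i = 0 by simp at hi; omega, hp0]
      simp
  calc renewalSeq p (N + 1) = ∑ k ∈ range (N + 1), convPow p (k + 1) (N + 1) := by
        rw [renewalSeq, sum_range_succ']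
        simp [convPow]
    _ = ∑ i ∈ range (N + 2), renewalSeq p i * p (N + 1 - i) := by
        simp only [convPow]
        rw [sum_comm]
        exact sum_congr rfl hinner
    _ = _ := by
        rw [← sum_range_reflect]
        refine sum_congr rfl fun s hs => ?_
        rw [mul_comm, show N + 1 + 1 - 1 - s = N + 1 - s by omega,
          show N + 1 - (N + 1 - s) = s by simp at hs; omega]

lemma renewalSeq_mem_Icc (hp0 : p 0 = 0) (hpnn : ∀ t, 0 ≤ p t) (hp : HasSum p 1) (N : ℕ) :
    renewalSeq p N ∈ Set.Icc 0 1 := by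
  refine ⟨sum_nonneg fun k _ => convPow_nonneg_s8 hpnn k N, ?_⟩
  induction N using Nat.strong_induction_on with
  | _ N ih =>
    rcases Nat.eq_zero_or_pos N with rfl | hN
    · rw [renewalSeq_zero]
    rw [renewalSeq_eq hp0 hN.ne']
    calc ∑ s ∈ range (N + 1), p s * renewalSeq p (N - s) ≤ ∑ s ∈ range (N + 1), p s := by
          refine sum_le_sum fun s _ => ?_
          rcases Nat.eq_zero_or_pos s with rfl | hs
          · simp [hp0]
          · exact mul_le_of_le_one_right (hpnn s) (ih _ (by omega))
      _ ≤ 1 := sum_le_hasSum _ (fun s _ => hpnn s) hp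

end RenewalSeq

noncomputable def tailSum (p : ℕ → ℝ) (t : ℕ) : ℝ := ∑' s, if t < s then p s else 0

section TailSum

variable {p : ℕ → ℝ}

lemma tailSum_nonneg (hpnn : ∀ t, 0 ≤ p t) (t : ℕ) : 0 ≤ tailSum p t :=
  tsum_nonneg fun s => by split <;> simp [hpnn]

lemma hasSum_tailSum_terms (hp : HasSum p 1) (t : ℕ) :
    HasSum (fun s => if t < s then p s else 0) (1 - ∑ s ∈ range (t + 1), p s) := by
  refine (hasSum_nat_add_iff' (t + 1)).1 ?_
  have hlow : ∑ s ∈ range (t + 1), (if t < s then p s else 0) = 0 :=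
    sum_eq_zero fun s hs => if_neg (by simp at hs; omega)
  have hhigh : (fun n => if t < n + (t + 1) then p (n + (t + 1)) else 0)
      = fun n => p (n + (t + 1)) := funext fun n => if_pos (by omega)
  simpa [hlow, hhigh] using (hasSum_nat_add_iff' (t + 1)).2 hp

lemma tailSum_eq (hp : HasSum p 1) (t : ℕ) : tailSum p t = 1 - ∑ s ∈ range (t + 1), p s :=
  (hasSum_tailSum_terms hp t).tsum_eq

lemma sum_range_tailSum (hp : HasSum p 1) (n : ℕ) :
    ∑ t ∈ range n, tailSum p t = ∑' s, ((min s n : ℕ) : ℝ) * p s := by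
  simp only [tailSum]
  rw [← Summable.tsum_finsetSum fun t _ => (hasSum_tailSum_terms hp t).summable]
  refine tsum_congr fun s => ?_
  rw [← sum_filter, sum_const, nsmul_eq_mul]
  congr
  rw [← card_range (min s n)]
  congr 1
  ext t
  simp only [mem_filter, mem_range]
  omega

lemma hasSum_tailSum (hpnn : ∀ t, 0 ≤ p t) (hp : HasSum p 1) {μ : ℝ}
    (hμ : HasSum (fun s : ℕ => (s : ℝ) * p s) μ) : HasSum (tailSum p) μ := by
  rw [hasSum_iff_tendsto_nat_of_nonneg (tailSum_nonneg hpnn), ← hμ.tsum_eq]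
  simp only [sum_range_tailSum hp]
  refine tendsto_tsum_of_dominated_convergence hμ.summable (fun s => ?_) ?_
  · refine tendsto_const_nhds.congr' ?_
    filter_upwards [eventually_ge_atTop s] with n hn
    rw [min_eq_left hn]
  · refine Eventually.of_forall fun n s => ?_
    rw [Real.norm_of_nonneg (mul_nonneg (Nat.cast_nonneg _) (hpnn s))]
    gcongr
    · exact hpnn s
    · exact min_le_left s n

lemma sum_tailSum_mul_renewalSeq (hp0 : p 0 = 0) (hp : HasSum p 1) (N : ℕ) :
    ∑ t ∈ range (N + 1), tailSum p t * renewalSeq p (N - t) = 1 := by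
  induction N with
  | zero => simp [tailSum_eq hp, renewalSeq_zero, hp0]
  | succ N ih =>
    have htail : ∀ t, tailSum p (t + 1) = tailSum p t - p (t + 1) := fun t => by
      simp only [tailSum_eq hp, sum_range_succ _ (t + 1)]
      ring
    have hren : ∑ t ∈ range (N + 1), p (t + 1) * renewalSeq p (N - t) = renewalSeq p (N + 1) := by
      rw [renewalSeq_eq hp0 N.add_one_ne_zero, sum_range_succ' _ (N + 1), hp0, zero_mul, add_zero]
      simp only [Nat.add_sub_add_right]
    calc ∑ t ∈ range (N + 2), tailSum p t * renewalSeq p (N + 1 - t)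
        = ∑ t ∈ range (N + 1), tailSum p (t + 1) * renewalSeq p (N - t)
            + tailSum p 0 * renewalSeq p (N + 1) := by
          rw [sum_range_succ']
          simp only [Nat.add_sub_add_right, Nat.sub_zero]
      _ = 1 := by
          simp only [htail, sub_mul, sum_sub_distrib, ih, hren, tailSum_eq hp 0, zero_add,
            sum_range_one, hp0]
          ring

end TailSum

lemma tendsto_sum_range_of_dominated {α G : Type*} {𝓕 : Filter α}
    [NormedAddCommGroup G] [CompleteSpace G] {f : α → ℕ → G} {g : ℕ → G} {bound : ℕ → ℝ}
    {N : α → ℕ} (hN : Tendsto N 𝓕 atTop) (h_sum : Summable bound)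
    (hfg : ∀ k, Tendsto (f · k) 𝓕 (𝓝 (g k))) (h_bound : ∀ j k, ‖f j k‖ ≤ bound k) :
    Tendsto (fun j => ∑ k ∈ range (N j), f j k) 𝓕 (𝓝 (∑' k, g k)) := by
  simp only [fun j => sum_eq_tsum_indicator (f j) (range (N j))]
  refine tendsto_tsum_of_dominated_convergence h_sum (fun k => (hfg k).congr' ?_)
    (Eventually.of_forall fun j k => (norm_indicator_le_norm_self _ _).trans (h_bound j k))
  filter_upwards [hN.eventually_gt_atTop k] with j hj
  rw [Set.indicator_of_mem (by simpa using hj)]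

lemma exists_strictMono_tendsto_pi {X ι : Type*} [TopologicalSpace X] [FirstCountableTopology X]
    [Countable ι] {K : Set X} (hK : IsCompact K) {x : ℕ → ι → X} (hx : ∀ j i, x j i ∈ K) :
    ∃ w : ι → X, (∀ i, w i ∈ K) ∧
      ∃ ψ : ℕ → ℕ, StrictMono ψ ∧ ∀ i, Tendsto (fun j => x (ψ j) i) atTop (𝓝 (w i)) := by
  obtain ⟨w, hwK, ψ, hψ, hlim⟩ :=
    (isCompact_univ_pi fun _ => hK).tendsto_subseq fun j => Set.mem_univ_pi.2 (hx j)
  exact ⟨w, Set.mem_univ_pi.1 hwK, ψ, hψ, tendsto_pi_nhds.1 hlim⟩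

def IsHarmonic (p w : ℕ → ℝ) : Prop := ∀ n, HasSum (fun s => p s * w (n + s)) (w n)

section Harmonic

variable {p w : ℕ → ℝ}

/-- Zeros propagate forward along every step `s ≥ T₀`, hence to all `t ≥ T₀`, and then backward
because every value is an average of later ones. -/
lemma IsHarmonic.eq_zero_of_nonneg (hp0 : p 0 = 0) (hpnn : ∀ t, 0 ≤ p t) {T₀ : ℕ}
    (hpos : ∀ t, T₀ ≤ t → 0 < p t) (hw : IsHarmonic p w) (hwnn : ∀ n, 0 ≤ w n) (hw0 : w 0 = 0)
    (n : ℕ) : w n = 0 := by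
  have hterm : ∀ n, w n = 0 → ∀ s, p s * w (n + s) = 0 := fun n hn =>
    congrFun ((hasSum_zero_iff_of_nonneg fun s => mul_nonneg (hpnn s) (hwnn _)).1 (hn ▸ hw n))
  have hfar : ∀ t, T₀ ≤ t → w t = 0 := fun t ht => by
    simpa [(hpos t ht).ne'] using hterm 0 hw0 t
  have hback : ∀ k n, T₀ ≤ n + k → w n = 0 := by
    intro k
    induction k with
    | zero => exact hfar
    | succ k ih =>
      intro n hn
      have hzero : (fun s => p s * w (n + s)) = 0 := funext fun s => by
        rcases s with _ | s
        · simp [hp0]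
        · simp [ih (n + (s + 1)) (by omega)]
      exact (hw n).unique (hzero ▸ hasSum_zero)
  exact hback T₀ n (by omega)

lemma IsHarmonic.eq_of_forall_le (hp0 : p 0 = 0) (hpnn : ∀ t, 0 ≤ p t) (hp : HasSum p 1)
    {T₀ : ℕ} (hpos : ∀ t, T₀ ≤ t → 0 < p t) (hw : IsHarmonic p w) (hmax : ∀ n, w n ≤ w 0)
    (n : ℕ) : w n = w 0 := by
  have hv : IsHarmonic p (fun n => w 0 - w n) := fun n => by
    simpa [mul_sub] using (hp.mul_right (w 0)).sub (hw n)
  linarith [hv.eq_zero_of_nonneg hp0 hpnn hpos (fun n => sub_nonneg.2 (hmax n)) (sub_self _) n]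

lemma IsHarmonic.eq_of_forall_ge (hp0 : p 0 = 0) (hpnn : ∀ t, 0 ≤ p t) (hp : HasSum p 1)
    {T₀ : ℕ} (hpos : ∀ t, T₀ ≤ t → 0 < p t) (hw : IsHarmonic p w) (hmin : ∀ n, w 0 ≤ w n)
    (n : ℕ) : w n = w 0 := by
  have hv : IsHarmonic p (fun n => w n - w 0) := fun n => by
    simpa [mul_sub] using (hw n).sub (hp.mul_right (w 0))
  linarith [hv.eq_zero_of_nonneg hp0 hpnn hpos (fun n => sub_nonneg.2 (hmin n)) (sub_self _) n]

end Harmonic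

section RenewalTheorem

variable {p : ℕ → ℝ} {m : ℕ → ℕ}

lemma isHarmonic_of_tendsto_shift (hp0 : p 0 = 0) (hpnn : ∀ t, 0 ≤ p t) (hp : HasSum p 1)
    (hm : Tendsto m atTop atTop) {w : ℕ → ℝ} (hwI : ∀ n, w n ∈ Set.Icc 0 1)
    (hw : ∀ n, Tendsto (fun j => renewalSeq p (m j - n)) atTop (𝓝 (w n))) :
    IsHarmonic p w := by
  intro n
  refine (hp.summable.of_norm_bounded fun s =>
    norm_mul_le_of_mem_Icc (hpnn s) (hwI _)).hasSum_iff.2 ?_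
  have hlim := tendsto_sum_range_of_dominated (N := fun j => m j - n + 1)
    (f := fun j s => p s * renewalSeq p (m j - n - s)) (g := fun s => p s * w (n + s))
    ((tendsto_add_atTop_nat 1).comp ((tendsto_sub_atTop_nat n).comp hm)) hp.summable
    (fun s => by simpa [Nat.sub_sub] using (hw (n + s)).const_mul (p s))
    fun j s => norm_mul_le_of_mem_Icc (hpnn s) (renewalSeq_mem_Icc hp0 hpnn hp _)
  refine tendsto_nhds_unique (hlim.congr' ?_) (hw n)
  filter_upwards [((tendsto_sub_atTop_nat n).comp hm).eventually_ne_atTop 0] with j hj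
  exact (renewalSeq_eq hp0 hj).symm

lemma mul_mean_eq_one_of_tendsto_shift (hp0 : p 0 = 0) (hpnn : ∀ t, 0 ≤ p t) (hp : HasSum p 1)
    {μ : ℝ} (hμ : HasSum (fun t : ℕ => (t : ℝ) * p t) μ) (hm : Tendsto m atTop atTop) {c : ℝ}
    (hc : ∀ n, Tendsto (fun j => renewalSeq p (m j - n)) atTop (𝓝 c)) : c * μ = 1 := by
  have hr := hasSum_tailSum hpnn hp hμ
  have hlim := tendsto_sum_range_of_dominated (N := fun j => m j + 1)
    (f := fun j t => tailSum p t * renewalSeq p (m j - t)) (g := fun t => tailSum p t * c)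
    ((tendsto_add_atTop_nat 1).comp hm) hr.summable (fun t => (hc t).const_mul _)
    fun j t => norm_mul_le_of_mem_Icc (tailSum_nonneg hpnn t) (renewalSeq_mem_Icc hp0 hpnn hp _)
  simp only [sum_tailSum_mul_renewalSeq hp0 hp, (hr.mul_right c).tsum_eq] at hlim
  rw [mul_comm]
  exact tendsto_nhds_unique hlim tendsto_const_nhds

/-- The limits of the shifted sequences along a subsequence realising `c` form a harmonic function
with an extremum at `0`, which is therefore constant. -/
lemma mul_mean_eq_one_of_extremal (hp0 : p 0 = 0) (hpnn : ∀ t, 0 ≤ p t) (hp : HasSum p 1)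
    {μ : ℝ} (hμ : HasSum (fun t : ℕ => (t : ℝ) * p t) μ) {T₀ : ℕ} (hpos : ∀ t, T₀ ≤ t → 0 < p t)
    {c : ℝ} (hc : IsGreatest {x | MapClusterPt x atTop (renewalSeq p)} c ∨
      IsLeast {x | MapClusterPt x atTop (renewalSeq p)} c) : c * μ = 1 := by
  have hcl : MapClusterPt c atTop (renewalSeq p) := hc.elim (·.1) (·.1)
  obtain ⟨m, hmc, hm⟩ := hcl.exists_seq_tendsto
  obtain ⟨w, hwI, ψ, hψ, hw⟩ := exists_strictMono_tendsto_pi isCompact_Icc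
    (x := fun j n => renewalSeq p (m j - n)) fun j n => renewalSeq_mem_Icc hp0 hpnn hp _
  have hmψ : Tendsto (m ∘ ψ) atTop atTop := hm.comp hψ.tendsto_atTop
  have hw0 : w 0 = c := tendsto_nhds_unique (hw 0)
    (by simpa [Function.comp_def] using hmc.comp hψ.tendsto_atTop)
  have hwcl : ∀ n, w n ∈ {x | MapClusterPt x atTop (renewalSeq p)} := fun n =>
    ((hw n).mapClusterPt).of_comp ((tendsto_sub_atTop_nat n).comp hmψ)
  have hharm := isHarmonic_of_tendsto_shift hp0 hpnn hp hmψ hwI hw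
  have hconst : ∀ n, w n = c := fun n => hw0 ▸ by
    rcases hc with hmax | hmin
    · exact hharm.eq_of_forall_le hp0 hpnn hp hpos (fun n => hw0 ▸ hmax.2 (hwcl n)) n
    · exact hharm.eq_of_forall_ge hp0 hpnn hp hpos (fun n => hw0 ▸ hmin.2 (hwcl n)) n
  exact mul_mean_eq_one_of_tendsto_shift hp0 hpnn hp hμ hmψ fun n => hconst n ▸ hw n

theorem tendsto_renewalSeq (hp0 : p 0 = 0) (hpnn : ∀ t, 0 ≤ p t) (hp : HasSum p 1) {μ : ℝ}
    (hμ : HasSum (fun t : ℕ => (t : ℝ) * p t) μ) {T₀ : ℕ} (hpos : ∀ t, T₀ ≤ t → 0 < p t) :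
    Tendsto (renewalSeq p) atTop (𝓝 (1 / μ)) := by
  have hle : IsBoundedUnder (· ≤ ·) atTop (renewalSeq p) :=
    isBoundedUnder_of ⟨1, fun N => (renewalSeq_mem_Icc hp0 hpnn hp N).2⟩
  have hge : IsBoundedUnder (· ≥ ·) atTop (renewalSeq p) :=
    isBoundedUnder_of ⟨0, fun N => (renewalSeq_mem_Icc hp0 hpnn hp N).1⟩
  have hsup := mul_mean_eq_one_of_extremal hp0 hpnn hp hμ hpos
    (Or.inl (isGreatest_mapClusterPt_limsup hge.isCoboundedUnder_le hle))
  have hinf := mul_mean_eq_one_of_extremal hp0 hpnn hp hμ hpos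
    (Or.inr (isLeast_mapClusterPt_liminf hle.isCoboundedUnder_ge hge))
  exact tendsto_of_liminf_eq_limsup (eq_one_div_of_mul_eq_one_left hinf)
    (eq_one_div_of_mul_eq_one_left hsup) hle hge

end RenewalTheorem

lemma Zc_eq_exp_mul_renewalSeq (q : ℕ → ℝ) (δ F : ℝ) (N : ℕ) :
    Zc q δ N = Real.exp (N * F) * renewalSeq (fun t => δ * q t * Real.exp (-F * t)) N := by
  have hexp : Real.exp (N * F) * Real.exp (-F * N) = 1 := by
    rw [← Real.exp_add, ← Real.exp_zero]
    ring_nf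
  simp only [Zc, renewalSeq, mul_sum, convPow_tilt]
  refine sum_congr rfl fun k _ => ?_
  linear_combination (-(δ ^ k * convPow q k N)) * hexp

lemma one_le_of_hasSum_mul {p : ℕ → ℝ} (hp0 : p 0 = 0) (hpnn : ∀ t, 0 ≤ p t) (hp : HasSum p 1)
    {μ : ℝ} (hμ : HasSum (fun t : ℕ => (t : ℝ) * p t) μ) : 1 ≤ μ :=
  hasSum_le (fun t => by
    rcases t with _ | t
    · simp [hp0]
    · exact le_mul_of_one_le_left (hpnn _) (by simp)) hp hμ

theorem stmt_8_general (L : ℕ → ℝ)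
    (c_q : ℝ) (hcq : 0 < c_q)
    (q : ℕ → ℝ) (hq0 : q 0 = 0) (hqmem : ∀ n, q n ∈ Set.Icc (0 : ℝ) 1)
    (hqa : Tendsto (fun n : ℕ => (n : ℝ) ^ ((3 : ℝ) / 2) * q n / L n) atTop (nhds c_q))
    (δ : ℝ)
    (F : ℝ) (hFeq : δ * ∑' t : ℕ, q t * Real.exp (-F * t) = 1)
    (hμ : Summable (fun t : ℕ => (t : ℝ) * (δ * q t * Real.exp (-F * t)))) :
    Tendsto (fun N : ℕ =>
        Zc q δ N /
          ((1 / ∑' t : ℕ, (t : ℝ) * (δ * q t * Real.exp (-F * t))) * Real.exp (N * F)))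
      atTop (nhds 1) := by
  set p : ℕ → ℝ := fun t => δ * q t * Real.exp (-F * t)
  set μ := ∑' t : ℕ, (t : ℝ) * p t
  have hqe : Summable fun t : ℕ => q t * Real.exp (-F * t) := by
    by_contra h
    rw [tsum_eq_zero_of_not_summable h, mul_zero] at hFeq
    exact zero_ne_one hFeq
  have hδ : 0 < δ := pos_of_mul_pos_left (hFeq ▸ one_pos)
    (tsum_nonneg fun t => mul_nonneg (hqmem t).1 (Real.exp_pos _).le)
  have hp0 : p 0 = 0 := by simp [p, hq0]
  have hpnn : ∀ t, 0 ≤ p t := fun t => by positivity [(hqmem t).1]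
  have hp : HasSum p 1 := by simpa only [p, mul_assoc, hFeq] using hqe.hasSum.mul_left δ
  obtain ⟨T₀, hT₀⟩ := eventually_atTop.1 (hqa.eventually (eventually_gt_nhds hcq))
  have hpos : ∀ t, T₀ ≤ t → 0 < p t := fun t ht => by
    have hqt : q t ≠ 0 := fun h => by simpa [h] using hT₀ t ht
    have := lt_of_le_of_ne (hqmem t).1 hqt.symm
    positivity
  have hμ1 : 1 ≤ μ := one_le_of_hasSum_mul hp0 hpnn hp hμ.hasSum
  have hlim := (tendsto_renewalSeq hp0 hpnn hp hμ.hasSum hpos).mul_const μ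
  rw [one_div_mul_cancel (by linarith)] at hlim
  refine hlim.congr fun N => ?_
  rw [Zc_eq_exp_mul_renewalSeq q δ F N, mul_comm (1 / μ), ← div_div,
    mul_div_cancel_left₀ _ (Real.exp_pos _).ne', div_div_eq_mul_div, div_one]

/-- Localized regime, constrained case: for `δ > 1`,
`Z^c_{δ,N} ~ (1/μ_δ) e^{N F_δ}` as `N → ∞`, where `F_δ > 0` is the free energy
(`δ ∑_{t≥1} q(t) e^{−F_δ t} = 1`) and `μ_δ = ∑_{t≥1} t · δ q(t) e^{−F_δ t}`. -/
theorem stmt_8 (L : ℕ → ℝ) (hLpos : ∀ n, 0 < L n) (hL : SlowlyVaryingNat L)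
    (c_q : ℝ) (hcq : 0 < c_q)
    (q : ℕ → ℝ) (hq0 : q 0 = 0) (hqmem : ∀ n, q n ∈ Set.Icc (0 : ℝ) 1)
    (hqsum : ∑' n, q n = 1)
    (hqa : Tendsto (fun n : ℕ => (n : ℝ) ^ ((3 : ℝ) / 2) * q n / L n) atTop (nhds c_q))
    (δ : ℝ) (hδ : 1 < δ)
    (F : ℝ) (hF : 0 < F) (hFeq : δ * ∑' t : ℕ, q t * Real.exp (-F * t) = 1)
    (hμ : Summable (fun t : ℕ => (t : ℝ) * (δ * q t * Real.exp (-F * t)))) :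
    Tendsto (fun N : ℕ =>
        Zc q δ N /
          ((1 / ∑' t : ℕ, (t : ℝ) * (δ * q t * Real.exp (-F * t))) * Real.exp (N * F)))
      atTop (nhds 1) :=
  stmt_8_general L c_q hcq q hq0 hqmem hqa δ F hFeq hμ
end

section
/- (Key ratio limit behind the localized infinite-volume measure.) For every δ > 1 and every fixed k ∈ ℕ, lim_{N→∞} Z^c_{δ,N−k} / Z^c_{δ,N} = e^{−k F_δ}. Consequently, for any integers 0 = k_0 < k_1 < ⋯ < k_j, lim_{N→∞} (∏_{i=1}^{j} δ q(k_i − k_{i−1})) · Z^c_{δ,N−k_j}/Z^c_{δ,N} = ∏_{i=1}^{j} q_δ(k_i − k_{i−1}). -/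
open Filter Finset
open Topology

lemma convPow_eq_zero (q : ℕ → ℝ) (hq0 : q 0 = 0) : ∀ k n : ℕ, n < k → convPow q k n = 0 := by
  intro k
  induction k with
  | zero => intro n h; omega
  | succ k ih =>
    intro n h
    show (∑ i ∈ Finset.range (n + 1), convPow q k i * q (n - i)) = 0
    apply Finset.sum_eq_zero
    intro i hi
    simp only [Finset.mem_range] at hi
    rcases lt_or_ge i k with h1 | h1
    · rw [ih i h1, zero_mul]
    · have : n - i = 0 := by omega
      rw [this, hq0, mul_zero]

lemma Zc_zero (q : ℕ → ℝ) (δ : ℝ) : Zc q δ 0 = 1 := by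
  simp [Zc, convPow]

lemma Zc_rec (q : ℕ → ℝ) (hq0 : q 0 = 0) (δ : ℝ) (N : ℕ) (hN : 0 < N) :
    Zc q δ N = δ * ∑ i ∈ Finset.range N, q (N - i) * Zc q δ i := by
  have h1 : Zc q δ N = convPow q 0 N
      + ∑ k ∈ Finset.range N, δ ^ (k + 1) * convPow q (k + 1) N := by
    rw [Zc, Finset.sum_range_succ', pow_zero, one_mul, add_comm]
  have h2 : convPow q 0 N = 0 := by
    show (if N = 0 then (1:ℝ) else 0) = 0
    rw [if_neg (by omega)]
  rw [h1, h2, zero_add]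
  have h3 : ∀ k, δ ^ (k + 1) * convPow q (k + 1) N
      = δ * ∑ i ∈ Finset.range (N + 1), δ ^ k * (convPow q k i * q (N - i)) := by
    intro k
    show δ ^ (k+1) * (∑ i ∈ Finset.range (N + 1), convPow q k i * q (N - i)) = _
    rw [Finset.mul_sum, Finset.mul_sum]
    congr 1; funext i
    ring
  calc ∑ k ∈ Finset.range N, δ ^ (k + 1) * convPow q (k + 1) N
      = δ * ∑ k ∈ Finset.range N, ∑ i ∈ Finset.range (N + 1),
          δ ^ k * (convPow q k i * q (N - i)) := by
        rw [Finset.mul_sum]; exact Finset.sum_congr rfl fun k _ => h3 k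
    _ = δ * ∑ i ∈ Finset.range (N + 1), q (N - i) *
          ∑ k ∈ Finset.range N, δ ^ k * convPow q k i := by
        congr 1
        rw [Finset.sum_comm]
        refine Finset.sum_congr rfl fun i _ => ?_
        rw [Finset.mul_sum]
        refine Finset.sum_congr rfl fun k _ => ?_
        ring
    _ = δ * ∑ i ∈ Finset.range N, q (N - i) *
          ∑ k ∈ Finset.range N, δ ^ k * convPow q k i := by
        rw [Finset.sum_range_succ]
        simp [hq0]
    _ = δ * ∑ i ∈ Finset.range N, q (N - i) * Zc q δ i := by
        congr 1
        refine Finset.sum_congr rfl fun i hi => ?_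
        simp only [Finset.mem_range] at hi
        congr 1
        rw [Zc]
        symm
        apply Finset.sum_subset
        · intro k hk; simp only [Finset.mem_range] at *; omega
        · intro k _ hk
          simp only [Finset.mem_range, not_lt] at hk
          rw [convPow_eq_zero q hq0 k i (by omega), mul_zero]

section Renewal
variable (f : ℕ → ℝ) (u : ℕ → ℝ)

lemma renewal_tendsto (hf0 : f 0 = 0) (hfnn : ∀ t, 0 ≤ f t)
    (hfsum : Summable f) (hf1 : ∑' t, f t = 1)
    (C x : ℝ) (hx0 : 0 < x) (hx1 : x < 1) (hfle : ∀ t, f t ≤ C * x ^ t)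
    (n0 : ℕ) (hpos : ∀ t, n0 ≤ t → 0 < f t)
    (hu0 : u 0 = 1)
    (hurec : ∀ N : ℕ, 0 < N → u N = ∑ i ∈ Finset.range N, f (N - i) * u i) :
    ∃ l0 : ℝ, 0 < l0 ∧ Tendsto u atTop (𝓝 l0) := by
  -- bounds on u
  have hu01 : ∀ N, 0 ≤ u N ∧ u N ≤ 1 := by
    intro N
    induction N using Nat.strong_induction_on with
    | _ N ih =>
      rcases Nat.eq_zero_or_pos N with rfl | hN
      · simp [hu0]
      constructor
      · rw [hurec N hN]
        exact Finset.sum_nonneg fun i hi =>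
          mul_nonneg (hfnn _) (ih i (Finset.mem_range.mp hi)).1
      · rw [hurec N hN]
        calc ∑ i ∈ Finset.range N, f (N - i) * u i
            ≤ ∑ i ∈ Finset.range N, f (N - i) := by
              apply Finset.sum_le_sum
              intro i hi
              have := ih i (Finset.mem_range.mp hi)
              nlinarith [hfnn (N - i)]
          _ = ∑ j ∈ Finset.range N, f (j + 1) := by
              rw [← Finset.sum_range_reflect]
              apply Finset.sum_congr rfl
              intro j hj
              simp only [Finset.mem_range] at hj
              congr 1
              omega
          _ ≤ ∑' t, f t := by
              rw [← Summable.sum_add_tsum_nat_add 1 hfsum]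
              have : (∑ i ∈ Finset.range 1, f i) = 0 := by simp [hf0]
              rw [this, zero_add]
              exact Summable.sum_le_tsum _ (fun i _ => hfnn _) ((summable_nat_add_iff 1).mpr hfsum)
          _ = 1 := hf1
  -- the tail function r
  set r : ℕ → ℝ := fun a => ∑' i, f (i + (a + 1)) with hr_def
  have hshift_summable : ∀ k : ℕ, Summable (fun i => f (i + k)) := fun k =>
    (summable_nat_add_iff k).mpr hfsum
  have hr_eq : ∀ a, r a = 1 - ∑ i ∈ Finset.range (a + 1), f i := by
    intro a
    have := Summable.sum_add_tsum_nat_add (a + 1) hfsum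
    rw [hf1] at this
    simp only [hr_def]
    linarith
  have hr0 : r 0 = 1 := by
    rw [hr_eq]
    simp [hf0]
  have hr_nonneg : ∀ a, 0 ≤ r a := fun a => tsum_nonneg fun i => hfnn _
  have hr_le_one : ∀ a, r a ≤ 1 := by
    intro a
    rw [hr_eq]
    have : 0 ≤ ∑ i ∈ Finset.range (a + 1), f i :=
      Finset.sum_nonneg fun i _ => hfnn i
    linarith
  have hr_step : ∀ a, r a = f (a + 1) + r (a + 1) := by
    intro a
    have e1 := hr_eq a
    have e2 := hr_eq (a + 1)
    rw [Finset.sum_range_succ] at e2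
    rw [e1, e2]
    ring
  have hrsum : Summable r := by
    have hgeo : Summable (fun a : ℕ => (C * x / (1 - x)) * x ^ a) :=
      (summable_geometric_of_lt_one hx0.le hx1).mul_left _
    apply Summable.of_nonneg_of_le hr_nonneg _ hgeo
    intro a
    have h1 : r a ≤ ∑' i, C * x ^ (i + (a + 1)) := by
      apply Summable.tsum_le_tsum (fun i => hfle _) (hshift_summable _)
      have : (fun i : ℕ => C * x ^ (i + (a + 1))) = fun i : ℕ => (C * x ^ (a + 1)) * x ^ i := by
        funext i; rw [pow_add]; ring
      rw [this]
      exact (summable_geometric_of_lt_one hx0.le hx1).mul_left _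
    have h2 : (∑' i : ℕ, C * x ^ (i + (a + 1))) = (C * x / (1-x)) * x ^ a := by
      have : (fun i : ℕ => C * x ^ (i + (a + 1))) = fun i : ℕ => (C * x ^ (a + 1)) * x ^ i := by
        funext i; rw [pow_add]; ring
      rw [this, tsum_mul_left, tsum_geometric_of_lt_one hx0.le hx1]
      rw [pow_succ]
      field_simp
    linarith
  -- finite tail identity
  have htail : ∀ N : ℕ, ∑ i ∈ Finset.range (N + 1), r (N - i) * u i = 1 := by
    intro N
    induction N with
    | zero => simp [hr0, hu0]
    | succ N ih =>
      have key : ∑ i ∈ Finset.range (N + 1 + 1), r (N + 1 - i) * u i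
          = ∑ i ∈ Finset.range (N + 1), r (N - i) * u i := by
        rw [Finset.sum_range_succ]
        have hstep : ∀ i ∈ Finset.range (N + 1),
            r (N - i) * u i = f (N + 1 - i) * u i + r (N + 1 - i) * u i := by
          intro i hi
          simp only [Finset.mem_range] at hi
          have h1 : N - i + 1 = N + 1 - i := by omega
          rw [hr_step (N - i), h1]
          ring
        rw [Finset.sum_congr rfl hstep, Finset.sum_add_distrib]
        have hrec := hurec (N + 1) (Nat.succ_pos N)
        rw [Nat.sub_self, hr0]
        rw [← hrec]
        ring
      rw [key, ih]
  -- extension of u to ℤ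
  set U : ℤ → ℝ := fun z => if 0 ≤ z then u z.toNat else 0 with hU_def
  have hU01 : ∀ z, 0 ≤ U z ∧ U z ≤ 1 := by
    intro z
    simp only [hU_def]
    split
    · exact hu01 _
    · norm_num
  have hUnat : ∀ n : ℕ, U (n : ℤ) = u n := by
    intro n
    simp [hU_def]
  have hUneg : ∀ z : ℤ, z < 0 → U z = 0 := by
    intro z hz
    simp only [hU_def, if_neg (not_le.mpr hz)]
  -- renewal equation on ℤ
  have hUrec : ∀ z : ℤ, 1 ≤ z → U z = ∑' t : ℕ, f t * U (z - t) := by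
    intro z hz
    set N : ℕ := z.toNat with hN
    have hzN : z = (N : ℤ) := by omega
    have hN1 : 1 ≤ N := by omega
    rw [tsum_eq_sum (s := Finset.range (N + 1)) ?side]
    case side =>
      intro t ht
      simp only [Finset.mem_range, not_lt] at ht
      have : z - t < 0 := by omega
      rw [hUneg _ this, mul_zero]
    have hterm : ∀ t ∈ Finset.range (N + 1), f t * U (z - t) = f t * u (N - t) := by
      intro t ht
      simp only [Finset.mem_range] at ht
      have : z - t = ((N - t : ℕ) : ℤ) := by omega
      rw [this, hUnat]
    rw [Finset.sum_congr rfl hterm]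
    have hrefl : ∑ t ∈ Finset.range (N + 1), f t * u (N - t)
        = ∑ i ∈ Finset.range (N + 1), f (N - i) * u i := by
      rw [← Finset.sum_range_reflect]
      apply Finset.sum_congr rfl
      intro j hj
      simp only [Finset.mem_range] at hj
      congr 2 <;> omega
    rw [hrefl, Finset.sum_range_succ, Nat.sub_self, hf0, zero_mul, add_zero,
      hzN, hUnat, hurec N (by omega)]
  -- tail identity on ℤ
  have hUtail : ∀ z : ℤ, 0 ≤ z → ∑' a : ℕ, r a * U (z - a) = 1 := by
    intro z hz
    set N : ℕ := z.toNat with hN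
    have hzN : z = (N : ℤ) := by omega
    rw [tsum_eq_sum (s := Finset.range (N + 1)) ?side2]
    case side2 =>
      intro a ha
      simp only [Finset.mem_range, not_lt] at ha
      have : z - a < 0 := by omega
      rw [hUneg _ this, mul_zero]
    have hterm : ∀ a ∈ Finset.range (N + 1), r a * U (z - a) = r a * u (N - a) := by
      intro a ha
      simp only [Finset.mem_range] at ha
      have : z - a = ((N - a : ℕ) : ℤ) := by omega
      rw [this, hUnat]
    rw [Finset.sum_congr rfl hterm]
    have hrefl : ∑ a ∈ Finset.range (N + 1), r a * u (N - a)
        = ∑ i ∈ Finset.range (N + 1), r (N - i) * u i := by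
      rw [← Finset.sum_range_reflect]
      apply Finset.sum_congr rfl
      intro j hj
      simp only [Finset.mem_range] at hj
      congr 2 <;> omega
    rw [hrefl, htail]
  -- positivity of n0
  have hn0pos : 0 < n0 := by
    by_contra h
    have h2 := hpos 0 (by omega)
    rw [hf0] at h2
    exact lt_irrefl 0 h2
  set μ : ℝ := ∑' a, r a with hmu_def
  have hmu1 : 1 ≤ μ := by
    have h := Summable.le_tsum hrsum 0 (fun a _ => hr_nonneg a)
    rwa [hr0] at h
  have hmupos : 0 < μ := lt_of_lt_of_le one_pos hmu1
  -- the key lemma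
  have keylem : ∀ (lam : ℝ) (n : ℕ → ℕ), Tendsto n atTop atTop →
      Tendsto (fun j => u (n j)) atTop (𝓝 lam) →
      ((∀ ε : ℝ, 0 < ε → ∀ᶠ N in atTop, u N < lam + ε) ∨
       (∀ ε : ℝ, 0 < ε → ∀ᶠ N in atTop, lam - ε < u N)) →
      lam * μ = 1 := by
    intro lam n hn hulim hcase
    set W : ℕ → (ℤ → Set.Icc (0:ℝ) 1) :=
      fun j s => ⟨U ((n j : ℤ) + s), (hU01 _).1, (hU01 _).2⟩ with hW_def
    obtain ⟨vI, -, φ, hφ, hWlim⟩ :=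
      isCompact_univ.tendsto_subseq (x := W) (fun j => Set.mem_univ _)
    set m : ℕ → ℕ := fun j => n (φ j) with hm_def
    have hm : Tendsto m atTop atTop := hn.comp hφ.tendsto_atTop
    set v : ℤ → ℝ := fun s => (vI s : ℝ) with hv_def
    have hvlim : ∀ s : ℤ, Tendsto (fun j => U ((m j : ℤ) + s)) atTop (𝓝 (v s)) := by
      intro s
      exact (continuous_subtype_val.tendsto _).comp (tendsto_pi_nhds.mp hWlim s)
    have hv01 : ∀ s, 0 ≤ v s ∧ v s ≤ 1 := fun s => ⟨(vI s).2.1, (vI s).2.2⟩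
    have hv0 : v 0 = lam := by
      have h1 : Tendsto (fun j => U ((m j : ℤ) + 0)) atTop (𝓝 lam) := by
        have he : (fun j => U ((m j : ℤ) + 0)) = fun j => u (m j) := by
          funext j; rw [add_zero, hUnat]
        rw [he]
        exact hulim.comp hφ.tendsto_atTop
      exact tendsto_nhds_unique (hvlim 0) h1
    have hmshift : ∀ s : ℤ, Tendsto (fun j => (m j : ℤ) + s) atTop atTop :=
      fun s => tendsto_atTop_add_const_right _ s (tendsto_natCast_atTop_atTop.comp hm)
    have hbound : (∀ s, v s ≤ lam) ∨ (∀ s, lam ≤ v s) := by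
      rcases hcase with hc | hc
      · left
        intro s
        have hall : ∀ ε : ℝ, 0 < ε → v s ≤ lam + ε := by
          intro ε hε
          obtain ⟨T, hT⟩ := eventually_atTop.mp (hc ε hε)
          apply le_of_tendsto (hvlim s)
          filter_upwards [(hmshift s).eventually_ge_atTop (T : ℤ)] with j hj
          have h0 : (0:ℤ) ≤ (m j : ℤ) + s := le_trans (Int.ofNat_nonneg T) hj
          have he : U ((m j : ℤ) + s) = u (((m j : ℤ) + s).toNat) := by
            simp only [hU_def, if_pos h0]
          rw [he]
          exact (hT _ (by omega)).le
        exact le_of_forall_pos_le_add hall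
      · right
        intro s
        have hall : ∀ ε : ℝ, 0 < ε → lam - ε ≤ v s := by
          intro ε hε
          obtain ⟨T, hT⟩ := eventually_atTop.mp (hc ε hε)
          apply ge_of_tendsto (hvlim s)
          filter_upwards [(hmshift s).eventually_ge_atTop (T : ℤ)] with j hj
          have h0 : (0:ℤ) ≤ (m j : ℤ) + s := le_trans (Int.ofNat_nonneg T) hj
          have he : U ((m j : ℤ) + s) = u (((m j : ℤ) + s).toNat) := by
            simp only [hU_def, if_pos h0]
          rw [he]
          exact (hT _ (by omega)).le
        apply le_of_forall_pos_le_add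
        intro ε hε
        have h3 := hall ε hε
        linarith
    have hveq : ∀ s : ℤ, v s = ∑' t : ℕ, f t * v (s - t) := by
      intro s
      have h2 : Tendsto (fun j => ∑' t : ℕ, f t * U ((m j : ℤ) + s - t)) atTop
          (𝓝 (∑' t : ℕ, f t * v (s - t))) := by
        apply tendsto_tsum_of_dominated_convergence (bound := f) hfsum
        · intro t
          have he : ∀ j, ((m j : ℤ) + s - t) = (m j : ℤ) + (s - t) := fun j => by ring
          simp only [he]
          exact ((hvlim (s - t)).const_mul (f t))
        · filter_upwards with j
          intro t
          rw [Real.norm_eq_abs, abs_mul, abs_of_nonneg (hfnn t),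
            abs_of_nonneg (hU01 _).1]
          nlinarith [(hU01 ((m j : ℤ) + s - t)).2, hfnn t]
      have h3 : ∀ᶠ j in atTop, U ((m j : ℤ) + s) = ∑' t : ℕ, f t * U ((m j : ℤ) + s - t) := by
        filter_upwards [(hmshift s).eventually_ge_atTop 1] with j hj
        exact hUrec _ hj
      exact tendsto_nhds_unique (hvlim s) (h2.congr' (h3.mono fun j h => h.symm))
    have hlamnn : 0 ≤ lam := hv0 ▸ (hv01 0).1
    have hvconst : ∀ s : ℤ, s ≤ -(n0:ℤ) → v s = lam := by
      have hstep : ∀ t0 : ℕ, 0 < f t0 → v (0 - (t0:ℤ)) = lam := by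
        intro t0 hft0
        by_contra hne
        have heq : lam = ∑' t : ℕ, f t * v (0 - t) := by rw [← hv0]; exact hveq 0
        have hsumv : Summable (fun t : ℕ => f t * v (0 - t)) := by
          apply Summable.of_nonneg_of_le
            (fun t => mul_nonneg (hfnn t) (hv01 _).1) _ hfsum
          intro t
          nlinarith [(hv01 ((0:ℤ) - t)).2, hfnn t]
        rcases hbound with hb | hb
        · have hlt : v (0 - (t0:ℤ)) < lam := lt_of_le_of_ne (hb _) hne
          have hc : (∑' t : ℕ, f t * v (0 - t)) < ∑' t : ℕ, f t * lam := by
            apply Summable.tsum_lt_tsum_of_nonneg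
            · intro b; exact mul_nonneg (hfnn b) (hv01 _).1
            · intro b; exact mul_le_mul_of_nonneg_left (hb _) (hfnn b)
            · exact (mul_lt_mul_iff_right₀ hft0).mpr hlt
            · exact hfsum.mul_right lam
          rw [tsum_mul_right, hf1, one_mul] at hc
          linarith [heq]
        · have hlt : lam < v (0 - (t0:ℤ)) := lt_of_le_of_ne (hb _) (Ne.symm hne)
          have hc : (∑' t : ℕ, f t * lam) < ∑' t : ℕ, f t * v (0 - t) := by
            apply Summable.tsum_lt_tsum_of_nonneg
            · intro b; exact mul_nonneg (hfnn b) hlamnn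
            · intro b; exact mul_le_mul_of_nonneg_left (hb _) (hfnn b)
            · exact (mul_lt_mul_iff_right₀ hft0).mpr hlt
            · exact hsumv
          rw [tsum_mul_right, hf1, one_mul] at hc
          linarith [heq]
      intro s hs
      have h1 : s = 0 - (((-s).toNat : ℕ) : ℤ) := by omega
      rw [h1]
      exact hstep _ (hpos _ (by omega))
    have htlim : Tendsto (fun j => ∑' a : ℕ, r a * U ((m j : ℤ) + (-(n0:ℤ) - a))) atTop
        (𝓝 (∑' a : ℕ, r a * v (-(n0:ℤ) - a))) := by
      apply tendsto_tsum_of_dominated_convergence (bound := r) hrsum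
      · intro a
        exact (hvlim _).const_mul (r a)
      · filter_upwards with j
        intro a
        rw [Real.norm_eq_abs, abs_mul, abs_of_nonneg (hr_nonneg a),
          abs_of_nonneg (hU01 _).1]
        nlinarith [(hU01 ((m j : ℤ) + (-(n0:ℤ) - a))).2, hr_nonneg a]
    have hone : ∀ᶠ j in atTop,
        (∑' a : ℕ, r a * U ((m j : ℤ) + (-(n0:ℤ) - a))) = 1 := by
      filter_upwards [hm.eventually_ge_atTop n0] with j hj
      have hz : (0:ℤ) ≤ (m j : ℤ) - n0 := by
        have : (n0 : ℤ) ≤ (m j : ℤ) := by exact_mod_cast hj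
        omega
      have ht := hUtail ((m j : ℤ) - n0) hz
      have he : ∀ a : ℕ, ((m j : ℤ) + (-(n0:ℤ) - a)) = ((m j : ℤ) - n0) - a := fun a => by ring
      simp only [he]
      exact ht
    have hS1 : (∑' a : ℕ, r a * v (-(n0:ℤ) - a)) = 1 :=
      tendsto_nhds_unique (htlim.congr' hone) tendsto_const_nhds
    have hS2 : (∑' a : ℕ, r a * lam) = 1 := by
      rw [← hS1]
      congr 1
      funext a
      rw [hvconst _ (by omega)]
    rw [tsum_mul_right] at hS2
    rw [mul_comm]
    exact hS2
  -- limsup/liminf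
  have hbddA : IsBoundedUnder (· ≤ ·) atTop u := isBoundedUnder_of ⟨1, fun N => (hu01 N).2⟩
  have hbddB : IsBoundedUnder (· ≥ ·) atTop u := isBoundedUnder_of ⟨0, fun N => (hu01 N).1⟩
  set ls := limsup u atTop with hls_def
  set li := liminf u atTop with hli_def
  have seq_of_freq : ∀ a : ℝ, (∀ ε : ℝ, 0 < ε → ∃ᶠ N in atTop, |u N - a| < ε) →
      ∃ n : ℕ → ℕ, Tendsto n atTop atTop ∧ Tendsto (fun j => u (n j)) atTop (𝓝 a) := by
    intro a hfreq
    have H : ∀ j s : ℕ, ∃ N, s ≤ N ∧ |u N - a| < 1 / ((j : ℝ) + 1) := by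
      intro j s
      obtain ⟨N, hN1, hN2⟩ := (frequently_atTop.mp (hfreq (1 / ((j : ℝ) + 1)) (by positivity))) s
      exact ⟨N, hN1, hN2⟩
    set n : ℕ → ℕ :=
      fun j => Nat.rec (H 0 0).choose (fun j ih => (H (j + 1) (ih + 1)).choose) j with hn_def
    have hspec : ∀ j, |u (n j) - a| < 1 / ((j : ℝ) + 1) := by
      intro j
      cases j with
      | zero => exact (H 0 0).choose_spec.2
      | succ j =>
        have : n (j + 1) = (H (j + 1) (n j + 1)).choose := rfl
        rw [this]
        exact (H (j + 1) (n j + 1)).choose_spec.2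
    have hmono : ∀ j, n j < n (j + 1) := by
      intro j
      have h1 := (H (j + 1) (n j + 1)).choose_spec.1
      have h2 : n (j + 1) = (H (j + 1) (n j + 1)).choose := rfl
      omega
    refine ⟨n, (strictMono_nat_of_lt_succ hmono).tendsto_atTop, ?_⟩
    have h0 : Tendsto (fun j : ℕ => 1 / ((j : ℝ) + 1)) atTop (𝓝 0) :=
      tendsto_one_div_add_atTop_nhds_zero_nat
    rw [tendsto_iff_dist_tendsto_zero]
    simp only [Real.dist_eq]
    exact squeeze_zero (fun j => abs_nonneg _) (fun j => (hspec j).le) h0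
  have hlsmu : ls * μ = 1 := by
    have hfr : ∀ ε : ℝ, 0 < ε → ∃ᶠ N in atTop, |u N - ls| < ε := by
      intro ε hε
      have h1 : ∃ᶠ N in atTop, ls - ε < u N :=
        frequently_lt_of_lt_limsup hbddB.isCoboundedUnder_le (by linarith)
      have h2 : ∀ᶠ N in atTop, u N < ls + ε :=
        eventually_lt_of_limsup_lt (by linarith) hbddA
      exact (h1.and_eventually h2).mono fun N hN => abs_lt.mpr ⟨by linarith [hN.1], by linarith [hN.2]⟩
    obtain ⟨n, hn, hnu⟩ := seq_of_freq ls hfr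
    refine keylem ls n hn hnu (Or.inl fun ε hε => ?_)
    exact eventually_lt_of_limsup_lt (by linarith) hbddA
  have hlimu : li * μ = 1 := by
    have hfr : ∀ ε : ℝ, 0 < ε → ∃ᶠ N in atTop, |u N - li| < ε := by
      intro ε hε
      have h1 : ∃ᶠ N in atTop, u N < li + ε :=
        frequently_lt_of_liminf_lt hbddA.isCoboundedUnder_ge (by linarith)
      have h2 : ∀ᶠ N in atTop, li - ε < u N :=
        eventually_lt_of_lt_liminf (by linarith) hbddB
      exact (h1.and_eventually h2).mono fun N hN => abs_lt.mpr ⟨by linarith [hN.2], by linarith [hN.1]⟩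
    obtain ⟨n, hn, hnu⟩ := seq_of_freq li hfr
    refine keylem li n hn hnu (Or.inr fun ε hε => ?_)
    exact eventually_lt_of_lt_liminf (by linarith) hbddB
  refine ⟨1 / μ, by positivity, ?_⟩
  have hlse : ls = 1 / μ := by field_simp; linarith [hlsmu]
  have hlie : li = 1 / μ := by field_simp; linarith [hlimu]
  exact tendsto_of_liminf_eq_limsup hlie hlse hbddA hbddB

end Renewal

/-- Key ratio limit behind the localized infinite-volume measure: for `δ > 1` and fixed `k`,
`Z^c_{δ,N−k}/Z^c_{δ,N} → e^{−k F_δ}`; consequently for `0 = k₀ < k₁ < ⋯ < k_j`,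
`(∏_{i=1}^{j} δ q(k_i − k_{i−1})) Z^c_{δ,N−k_j}/Z^c_{δ,N} → ∏_{i=1}^{j} q_δ(k_i − k_{i−1})`,
where `q_δ(t) = δ q(t) e^{−F_δ t}`. -/
theorem stmt_10 (L : ℕ → ℝ) (hLpos : ∀ n, 0 < L n) (hL : SlowlyVaryingNat L)
    (c_q : ℝ) (hcq : 0 < c_q)
    (q : ℕ → ℝ) (hq0 : q 0 = 0) (hqmem : ∀ n, q n ∈ Set.Icc (0 : ℝ) 1)
    (hqsum : ∑' n, q n = 1)
    (hqa : Tendsto (fun n : ℕ => (n : ℝ) ^ ((3 : ℝ) / 2) * q n / L n) atTop (nhds c_q))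
    (δ : ℝ) (hδ : 1 < δ)
    (F : ℝ) (hF : 0 < F) (hFeq : δ * ∑' t : ℕ, q t * Real.exp (-F * t) = 1) :
    (∀ k : ℕ,
      Tendsto (fun N : ℕ => Zc q δ (N - k) / Zc q δ N) atTop
        (nhds (Real.exp (-(k : ℝ) * F)))) ∧
    (∀ (j : ℕ) (k : ℕ → ℕ), k 0 = 0 → (∀ i < j, k i < k (i + 1)) →
      Tendsto (fun N : ℕ =>
          (∏ i ∈ Finset.range j, δ * q (k (i + 1) - k i)) * (Zc q δ (N - k j) / Zc q δ N))
        atTop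
        (nhds (∏ i ∈ Finset.range j,
          δ * q (k (i + 1) - k i) * Real.exp (-((k (i + 1) - k i : ℕ) : ℝ) * F)))) := by
  have hδ0 : (0:ℝ) < δ := lt_trans one_pos hδ
  have hx0 : (0:ℝ) < Real.exp (-F) := Real.exp_pos _
  have hx1 : Real.exp (-F) < 1 := Real.exp_lt_one_iff.mpr (by linarith)
  set f : ℕ → ℝ := fun t => δ * (q t * Real.exp (-F * t)) with hf_def
  have hexp_pow : ∀ t : ℕ, Real.exp (-F * t) = Real.exp (-F) ^ t := by
    intro t
    rw [← Real.exp_nat_mul]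
    congr 1
    ring
  have hf0 : f 0 = 0 := by simp [hf_def, hq0]
  have hfnn : ∀ t, 0 ≤ f t :=
    fun t => mul_nonneg hδ0.le (mul_nonneg (hqmem t).1 (Real.exp_pos _).le)
  have hfle : ∀ t, f t ≤ δ * Real.exp (-F) ^ t := by
    intro t
    rw [hf_def]
    simp only
    rw [← hexp_pow]
    have h1 : q t * Real.exp (-F * t) ≤ Real.exp (-F * t) := by
      nlinarith [(hqmem t).2, Real.exp_pos (-F * t), (hqmem t).1]
    nlinarith
  have hfsum : Summable f := by
    apply Summable.of_nonneg_of_le hfnn hfle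
    exact (summable_geometric_of_lt_one hx0.le hx1).mul_left δ
  have hf1 : ∑' t, f t = 1 := by
    rw [hf_def, tsum_mul_left, hFeq]
  -- positivity threshold
  have hqev : ∀ᶠ t : ℕ in atTop, 0 < q t := by
    have h1 : ∀ᶠ y in 𝓝 c_q, c_q / 2 < y := eventually_gt_nhds (by linarith)
    filter_upwards [hqa.eventually h1, eventually_ge_atTop 1] with t ht ht1
    have hLt := hLpos t
    have hnum : 0 < (t : ℝ) ^ ((3:ℝ)/2) * q t := by
      have h2 : 0 < (t : ℝ) ^ ((3:ℝ)/2) * q t / L t := lt_trans (by positivity) ht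
      by_contra hcon
      push_neg at hcon
      have : (t : ℝ) ^ ((3:ℝ)/2) * q t / L t ≤ 0 := div_nonpos_of_nonpos_of_nonneg hcon hLt.le
      linarith
    have hpow : 0 < (t : ℝ) ^ ((3:ℝ)/2) := by
      apply Real.rpow_pos_of_pos
      exact_mod_cast Nat.lt_of_lt_of_le Nat.zero_lt_one ht1
    nlinarith [(hqmem t).1]
  obtain ⟨n1, hn1⟩ := eventually_atTop.mp hqev
  set n0 : ℕ := n1 + 1 with hn0_def
  have hpos : ∀ t, n0 ≤ t → 0 < f t := by
    intro t ht
    have hq : 0 < q t := hn1 t (by omega)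
    have := Real.exp_pos (-F * t)
    rw [hf_def]
    positivity
  -- u
  set u : ℕ → ℝ := fun N => Real.exp (-F * N) * Zc q δ N with hu_def
  have hu0 : u 0 = 1 := by
    rw [hu_def]
    simp [Zc_zero]
  have hurec : ∀ N : ℕ, 0 < N → u N = ∑ i ∈ Finset.range N, f (N - i) * u i := by
    intro N hN
    rw [hu_def]
    simp only
    rw [Zc_rec q hq0 δ N hN, Finset.mul_sum, Finset.mul_sum]
    apply Finset.sum_congr rfl
    intro i hi
    simp only [Finset.mem_range] at hi
    have hcast : ((N - i : ℕ) : ℝ) = (N : ℝ) - i := by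
      rw [Nat.cast_sub hi.le]
    have hexp : Real.exp (-F * ((N - i : ℕ) : ℝ)) * Real.exp (-F * (i:ℝ))
        = Real.exp (-F * (N:ℝ)) := by
      rw [← Real.exp_add]
      congr 1
      rw [hcast]
      ring
    rw [hf_def]
    simp only
    rw [show δ * (q (N - i) * Real.exp (-F * ((N - i:ℕ):ℝ)))
        * (Real.exp (-F * (i:ℝ)) * Zc q δ i)
        = (Real.exp (-F * ((N - i:ℕ):ℝ)) * Real.exp (-F * (i:ℝ)))
          * (δ * (q (N - i) * Zc q δ i)) from by ring, hexp]
  obtain ⟨l0, hl0, hul⟩ := renewal_tendsto f u hf0 hfnn hfsum hf1 δ (Real.exp (-F))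
    hx0 hx1 hfle n0 hpos hu0 hurec
  have part1 : ∀ k : ℕ,
      Tendsto (fun N : ℕ => Zc q δ (N - k) / Zc q δ N) atTop
        (𝓝 (Real.exp (-(k : ℝ) * F))) := by
    intro k
    have h1 : Tendsto (fun N : ℕ => u (N - k)) atTop (𝓝 l0) :=
      hul.comp (tendsto_sub_atTop_nat k)
    have h2 : Tendsto (fun N : ℕ => u (N - k) / u N) atTop (𝓝 1) := by
      have h := h1.div hul (ne_of_gt hl0)
      rwa [div_self (ne_of_gt hl0)] at h
    have h3 : Tendsto (fun N : ℕ => Real.exp (-(k:ℝ) * F) * (u (N - k) / u N)) atTop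
        (𝓝 (Real.exp (-(k:ℝ) * F))) := by
      have h := h2.const_mul (Real.exp (-(k:ℝ) * F))
      rwa [mul_one] at h
    apply h3.congr'
    filter_upwards [eventually_ge_atTop k] with N hN
    have hcast : ((N - k : ℕ) : ℝ) = (N : ℝ) - k := by rw [Nat.cast_sub hN]
    have hE : Real.exp (-(k:ℝ) * F) * Real.exp (-F * ((N - k:ℕ):ℝ))
        = Real.exp (-F * (N:ℝ)) := by
      rw [← Real.exp_add]
      congr 1
      rw [hcast]
      ring
    rw [hu_def]
    simp only
    rw [show Real.exp (-(k:ℝ) * F)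
        * (Real.exp (-F * ((N - k:ℕ):ℝ)) * Zc q δ (N - k) / (Real.exp (-F * (N:ℝ)) * Zc q δ N))
        = (Real.exp (-(k:ℝ) * F) * Real.exp (-F * ((N - k:ℕ):ℝ))) * Zc q δ (N - k)
          / (Real.exp (-F * (N:ℝ)) * Zc q δ N) from by ring, hE,
      mul_div_mul_left _ _ (Real.exp_ne_zero _)]
  refine ⟨part1, ?_⟩
  intro j k hk0 hkmono
  have hsum : ∑ i ∈ Finset.range j, ((k (i+1) - k i : ℕ) : ℝ) = (k j : ℝ) := by
    have hterm : ∀ i ∈ Finset.range j, ((k (i+1) - k i : ℕ) : ℝ) = ((k (i+1) : ℝ) - (k i : ℝ)) := by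
      intro i hi
      rw [Nat.cast_sub (hkmono i (Finset.mem_range.mp hi)).le]
    rw [Finset.sum_congr rfl hterm, Finset.sum_range_sub (fun i => (k i : ℝ)), hk0]
    simp
  have h2 := (part1 (k j)).const_mul (∏ i ∈ Finset.range j, δ * q (k (i + 1) - k i))
  have heq : (∏ i ∈ Finset.range j,
      δ * q (k (i + 1) - k i) * Real.exp (-((k (i + 1) - k i : ℕ) : ℝ) * F))
      = (∏ i ∈ Finset.range j, δ * q (k (i + 1) - k i)) * Real.exp (-(k j : ℝ) * F) := by
    rw [Finset.prod_mul_distrib, ← Real.exp_sum]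
    congr 1
    have h3 : ∀ i ∈ Finset.range j,
        -(((k (i+1) - k i : ℕ)):ℝ) * F = (((k (i+1) - k i : ℕ)):ℝ) * (-F) :=
      fun i _ => by ring
    rw [Finset.sum_congr rfl h3, ← Finset.sum_mul, hsum]
    ring
  rw [heq]
  exact h2
end

section
/- (Cyclic lemma for densities.) Let h : ℝ → [0,∞) be a measurable probability density (∫_ℝ h(x) dx = 1). For every n ≥ 1, ∫_{ℝ^n} ∏_{i=0}^{n} h(x_{i+1} − x_i) dx_1 ⋯ dx_n = (n+1) · ∫_{(0,∞)^n} ∏_{i=0}^{n} h(x_{i+1} − x_i) dx_1 ⋯ dx_n, where in both integrals x_0 := 0 and x_{n+1} := 0. Equivalently, the (n+1)-fold convolution density value h^{*(n+1)}(0) := ∫_{ℝ^n} ∏_{i=0}^{n} h(x_{i+1} − x_i) dx equals (n+1) times the integral of the same integrand restricted to the positive orthant. -/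
/-!
Index the points `0, x₁, …, xₙ` of the closed walk by `ℤ/(n+1)`, so that its `n + 1` increments
are the differences of cyclically consecutive points. Restarting the walk at its next point is a
linear map of order `n + 1`; hence its determinant is `±1` and it preserves Lebesgue measure, and it
only permutes the increments, so the integrand is invariant. For almost every `x` the points are
distinct, and then exactly one of the `n + 1` restarts, the one at the lowest point, lies in the
positive orthant. So `ℝⁿ` is, up to a null set, the disjoint union of the preimages of the orthant
under the `n + 1` restarts, and each piece carries the integral over the orthant.
-/

open Finset MeasureTheory
open scoped ENNReal Fin.NatCast Fin.CommRing

theorem MeasureTheory.lintegral_eq_card_mul_setLIntegral_of_ae_existsUnique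
    {α ι : Type*} [MeasurableSpace α] [Fintype ι] {μ : Measure α} {g : ι → α → α}
    (hg : ∀ i, MeasurePreserving (g i) μ μ) (hge : ∀ i, MeasurableEmbedding (g i))
    {f : α → ℝ≥0∞} (hf : ∀ i x, f (g i x) = f x) {s : Set α} (hs : MeasurableSet s)
    (hu : ∀ᵐ x ∂μ, ∃! i, g i x ∈ s) :
    ∫⁻ x, f x ∂μ = Fintype.card ι * ∫⁻ x in s, f x ∂μ := by
  have hcover : (⋃ i, g i ⁻¹' s) =ᵐ[μ] (Set.univ : Set α) :=
    ae_eq_univ.2 <| measure_mono_null (fun x (hx : x ∉ ⋃ i, g i ⁻¹' s) (hux : ∃! i, g i x ∈ s) ↦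
      hx (Set.mem_iUnion.2 hux.exists)) (ae_iff.1 hu)
  have hdisj : Pairwise (Function.onFun (AEDisjoint μ) fun i ↦ g i ⁻¹' s) := fun i j hij ↦
    measure_mono_null (fun x (hx : x ∈ g i ⁻¹' s ∩ g j ⁻¹' s) (hux : ∃! k, g k x ∈ s) ↦
      hij (hux.unique hx.1 hx.2)) (ae_iff.1 hu)
  calc ∫⁻ x, f x ∂μ = ∫⁻ x in ⋃ i, g i ⁻¹' s, f x ∂μ := by
        rw [Measure.restrict_congr_set hcover, Measure.restrict_univ]
    _ = ∑ i, ∫⁻ x in g i ⁻¹' s, f x ∂μ := by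
        rw [lintegral_iUnion₀ (fun i ↦ ((hg i).measurable hs).nullMeasurableSet)
          hdisj, tsum_fintype]
    _ = ∑ _i : ι, ∫⁻ x in s, f x ∂μ := sum_congr rfl fun i _ ↦ by
        simpa only [hf] using (hg i).setLIntegral_comp_preimage_emb (hge i) f s
    _ = Fintype.card ι * ∫⁻ x in s, f x ∂μ := by rw [sum_const, nsmul_eq_mul, card_univ]

section FiniteOrder

variable {E : Type*} [NormedAddCommGroup E] [NormedSpace ℝ E] [MeasurableSpace E] [BorelSpace E]
  [FiniteDimensional ℝ E] {f : E →ₗ[ℝ] E} {m : ℕ}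

theorem LinearMap.measurePreserving_of_pow_eq_one (μ : Measure E) [μ.IsAddHaarMeasure]
    (hm : m ≠ 0) (hf : f ^ m = 1) : MeasurePreserving f μ μ := by
  have hdet : |LinearMap.det f| = 1 := by
    refine (pow_eq_one_iff_of_nonneg (abs_nonneg _) hm).1 ?_
    rw [← abs_pow, ← map_pow, hf, map_one, abs_one]
  refine ⟨f.continuous_of_finiteDimensional.measurable, ?_⟩
  rw [Measure.map_linearMap_addHaar_eq_smul_addHaar μ (abs_ne_zero.1 (hdet ▸ one_ne_zero)),
    abs_inv, hdet, inv_one, ENNReal.ofReal_one, one_smul]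

theorem LinearMap.measurableEmbedding_of_pow_eq_one (hm : m ≠ 0) (hf : f ^ m = 1) :
    MeasurableEmbedding f :=
  (LinearEquiv.ofBijective f ((Module.End.isUnit_iff f).1
    (IsUnit.of_pow_eq_one hf hm))).toContinuousLinearEquiv.toHomeomorph.measurableEmbedding

end FiniteOrder

theorem LinearMap.ae_injective_of_injective {E ι F : Type*} [NormedAddCommGroup E]
    [NormedSpace ℝ E] [MeasurableSpace E] [BorelSpace E] [FiniteDimensional ℝ E]
    (μ : Measure E) [μ.IsAddHaarMeasure] [Finite ι] [AddCommGroup F] [Module ℝ F]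
    (L : E →ₗ[ℝ] ι → F) {v : E} (hv : Function.Injective (L v)) :
    ∀ᵐ x ∂μ, Function.Injective (L x) := by
  set K : ι → ι → Submodule ℝ E := fun j k ↦
    LinearMap.ker ((LinearMap.proj (R := ℝ) (φ := fun _ ↦ F) j - LinearMap.proj k) ∘ₗ L)
  have hK : ∀ j k, j ≠ k → μ (K j k) = 0 := fun j k hjk ↦
    Measure.addHaar_submodule μ _ fun htop ↦ hjk <| hv <| sub_eq_zero.1 <| by
      simpa [K] using (htop ▸ Submodule.mem_top : v ∈ K j k)
  refine measure_mono_null (t := ⋃ j, ⋃ k, ⋃ (_ : j ≠ k), (K j k : Set E)) ?_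
    (measure_iUnion_null fun j ↦ measure_iUnion_null fun k ↦ measure_iUnion_null (hK j k))
  intro x (hx : ¬Function.Injective (L x))
  obtain ⟨j, k, hjk, hne⟩ : ∃ j k, L x j = L x k ∧ j ≠ k := by
    simpa [Function.Injective] using hx
  simp only [Set.mem_iUnion]
  exact ⟨j, k, hne, by simp [K, hjk]⟩

theorem Function.Injective.existsUnique_forall_ne_lt {ι β : Type*} [Finite ι] [Nonempty ι]
    [LinearOrder β] {u : ι → β} (hu : Function.Injective u) : ∃! k, ∀ m ≠ k, u k < u m := by
  obtain ⟨k, hk⟩ := Finite.exists_min u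
  have hlt : ∀ m ≠ k, u k < u m := fun m hm ↦ (hk m).lt_of_ne (hu.ne hm.symm)
  exact ⟨k, hlt, fun k' hk' ↦ by_contra fun hne ↦ (hk' k (Ne.symm hne)).not_gt (hlt k' hne)⟩

namespace CyclicLemma

variable {n : ℕ}

/-- The points `0, x 0, …, x (n - 1)` of the walk, indexed by `Fin (n + 1)` with its cyclic
arithmetic, so that the step out of the last point leads back to `0`. -/
def walk : (Fin n → ℝ) →ₗ[ℝ] Fin (n + 1) → ℝ :=
  (Fin.consLinearEquiv ℝ fun _ ↦ ℝ).toLinearMap ∘ₗ LinearMap.inr ℝ ℝ (Fin n → ℝ)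

@[simp] lemma walk_zero (x : Fin n → ℝ) : walk x 0 = 0 := rfl

@[simp] lemma walk_succ (x : Fin n → ℝ) (i : Fin n) : walk x i.succ = x i := rfl

lemma walk_injective : Function.Injective (walk : (Fin n → ℝ) → Fin (n + 1) → ℝ) :=
  Fin.cons_right_injective (α := fun _ ↦ ℝ) 0

def rotate : Module.End ℝ (Fin n → ℝ) :=
  LinearMap.pi fun i ↦
    (LinearMap.proj (R := ℝ) (φ := fun _ ↦ ℝ) (i.succ + 1) - LinearMap.proj 1) ∘ₗ walk

lemma walk_rotate (x : Fin n → ℝ) (j : Fin (n + 1)) :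
    walk (rotate x) j = walk x (j + 1) - walk x 1 := by
  cases j using Fin.cases with
  | zero => simp
  | succ i => rfl

lemma walk_rotate_pow (x : Fin n → ℝ) (k : ℕ) (j : Fin (n + 1)) :
    walk ((rotate ^ k) x) j = walk x (j + k) - walk x k := by
  induction k generalizing j with
  | zero => simp
  | succ k ih =>
    rw [pow_succ', Module.End.mul_apply, walk_rotate, ih, ih]
    push_cast
    ring_nf

lemma rotate_pow_card : (rotate : Module.End ℝ (Fin n → ℝ)) ^ (n + 1) = 1 :=
  LinearMap.ext fun x ↦ walk_injective <| funext fun j ↦ by simp [walk_rotate_pow]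

lemma rotate_pow_mem_orthant_iff (x : Fin n → ℝ) (k : Fin (n + 1)) :
    (rotate ^ (k : ℕ)) x ∈ {y : Fin n → ℝ | ∀ i, 0 < y i} ↔ ∀ m ≠ k, walk x k < walk x m := by
  have hcoord : ∀ i, (rotate ^ (k : ℕ)) x i = walk x (i.succ + k) - walk x k := fun i ↦ by
    simpa using walk_rotate_pow x k i.succ
  simp only [Set.mem_ofPred_eq, hcoord, sub_pos]
  constructor
  · intro H m hm
    obtain ⟨i, hi⟩ := Fin.exists_succ_eq.2 (sub_ne_zero.2 hm)
    simpa [hi] using H i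
  · exact fun H i ↦ H _ fun he ↦ by simp at he

lemma injective_walk_natCast :
    Function.Injective (walk fun i : Fin n ↦ ((i : ℕ) + 1 : ℝ)) := by
  have hwalk :
      (walk fun i : Fin n ↦ ((i : ℕ) + 1 : ℝ)) = fun j : Fin (n + 1) ↦ ((j : ℕ) : ℝ) := by
    funext j
    cases j using Fin.cases <;> simp
  rw [hwalk]
  exact Nat.cast_injective.comp Fin.val_injective

lemma ae_existsUnique_rotate_pow_mem_orthant :
    ∀ᵐ x : Fin n → ℝ,
      ∃! k : Fin (n + 1), (rotate ^ (k : ℕ)) x ∈ {y : Fin n → ℝ | ∀ i, 0 < y i} := by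
  filter_upwards [walk.ae_injective_of_injective volume injective_walk_natCast] with x hx
  exact (existsUnique_congr (rotate_pow_mem_orthant_iff x)).2 hx.existsUnique_forall_ne_lt

lemma prod_walk_rotate_pow {M : Type*} [CommMonoid M] (w : ℝ → M) (k : ℕ) (x : Fin n → ℝ) :
    ∏ i, w (walk ((rotate ^ k) x) (i + 1) - walk ((rotate ^ k) x) i) =
      ∏ i, w (walk x (i + 1) - walk x i) := by
  induction k with
  | zero => simp
  | succ k ih =>
    rw [pow_succ', Module.End.mul_apply, ← ih]
    simp only [walk_rotate, sub_sub_sub_cancel_right]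
    exact Equiv.prod_comp (Equiv.addRight 1) fun i ↦ w (walk _ (i + 1) - walk _ i)

lemma cons_snoc_succ_sub_castSucc (x : Fin n → ℝ) (i : Fin (n + 1)) :
    (Fin.cons 0 (Fin.snoc x 0) : Fin (n + 2) → ℝ) i.succ -
      (Fin.cons 0 (Fin.snoc x 0) : Fin (n + 2) → ℝ) i.castSucc = walk x (i + 1) - walk x i := by
  rw [Fin.cons_snoc_eq_snoc_cons, Fin.snoc_castSucc]
  congr 1
  cases i using Fin.lastCases with
  | last => simp
  | cast k => rw [Fin.succ_castSucc, Fin.snoc_castSucc, Fin.coeSucc_eq_succ]; rfl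

end CyclicLemma

open CyclicLemma in
theorem stmt_13_general (h : ℝ → ℝ) (n : ℕ) :
    (∫⁻ x : Fin n → ℝ, ∏ i : Fin (n + 1),
        ENNReal.ofReal (h ((Fin.cons 0 (Fin.snoc x 0) : Fin (n + 2) → ℝ) i.succ -
          (Fin.cons 0 (Fin.snoc x 0) : Fin (n + 2) → ℝ) i.castSucc))) =
      (n + 1) *
        ∫⁻ x in {x : Fin n → ℝ | ∀ i, 0 < x i}, ∏ i : Fin (n + 1),
          ENNReal.ofReal (h ((Fin.cons 0 (Fin.snoc x 0) : Fin (n + 2) → ℝ) i.succ -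
            (Fin.cons 0 (Fin.snoc x 0) : Fin (n + 2) → ℝ) i.castSucc)) := by
  have hpow (k : ℕ) : (rotate ^ k : Module.End ℝ (Fin n → ℝ)) ^ (n + 1) = 1 := by
    rw [← pow_mul, mul_comm, pow_mul, rotate_pow_card, one_pow]
  have key := lintegral_eq_card_mul_setLIntegral_of_ae_existsUnique (μ := volume)
    (g := fun k : Fin (n + 1) ↦ ⇑(rotate ^ (k : ℕ)))
    (f := fun x ↦ ∏ i, ENNReal.ofReal (h (walk x (i + 1) - walk x i)))
    (fun k ↦ LinearMap.measurePreserving_of_pow_eq_one volume n.succ_ne_zero (hpow k))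
    (fun k ↦ LinearMap.measurableEmbedding_of_pow_eq_one n.succ_ne_zero (hpow k))
    (fun k ↦ prod_walk_rotate_pow (fun t ↦ ENNReal.ofReal (h t)) k)
    (by measurability) ae_existsUnique_rotate_pow_mem_orthant
  simpa only [cons_snoc_succ_sub_castSucc, Fintype.card_fin, Nat.cast_succ] using key

/-- Cyclic lemma for densities: if `h` is a probability density on `ℝ` then, with
`x₀ := 0` and `x_{n+1} := 0`,
`∫_{ℝ^n} ∏_{i=0}^{n} h(x_{i+1} − x_i) dx = (n+1) ∫_{(0,∞)^n} ∏_{i=0}^{n} h(x_{i+1} − x_i) dx`. -/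
theorem stmt_13 (h : ℝ → ℝ) (hmeas : Measurable h) (hnn : ∀ x, 0 ≤ h x)
    (hint : ∫ x : ℝ, h x = 1) (n : ℕ) (hn : 1 ≤ n) :
    (∫⁻ x : Fin n → ℝ, ∏ i : Fin (n + 1),
        ENNReal.ofReal (h ((Fin.cons 0 (Fin.snoc x 0) : Fin (n + 2) → ℝ) i.succ -
          (Fin.cons 0 (Fin.snoc x 0) : Fin (n + 2) → ℝ) i.castSucc))) =
      (n + 1) *
        ∫⁻ x in {x : Fin n → ℝ | ∀ i, 0 < x i}, ∏ i : Fin (n + 1),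
          ENNReal.ofReal (h ((Fin.cons 0 (Fin.snoc x 0) : Fin (n + 2) → ℝ) i.succ -
            (Fin.cons 0 (Fin.snoc x 0) : Fin (n + 2) → ℝ) i.castSucc)) :=
  stmt_13_general h n
end
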